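/- arXiv:2605.08968 — 10 statements merged into one kernel-verified Lean document; each statement's English description precedes it below -/
import Mathlib

section
/- For all integers n ≥ 2 and m ≥ 2, the number of multichains e_1 ≤ e_2 ≤ ⋯ ≤ e_{m-1} in the poset P_{t_n} equals ∑_{k=0}^{n-1} C(n-1, k) · (m-1)^k · C(m+n-k-1, n-k). -/
/-- The poset `P_{t_n}`: lattice points `a ∈ ℕ^n` with `a i ≤ 1` for the first
`n - 1` coordinates and total coordinate sum at most `n`, ordered coordinatewise
(the coordinatewise order is the `Pi` order on `Fin n → ℕ`). -/
def Ptn (n : ℕ) : Set (Fin n → ℕ) :=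
  {a | (∀ i : Fin n, (i : ℕ) < n - 1 → a i ≤ 1) ∧ ∑ i, a i ≤ n}

open Finset

namespace PtnAux

/-- bounded monotone sequences -/
abbrev MSeq (M N : ℕ) := {f : Fin M → ℕ // Monotone f ∧ ∀ k, f k ≤ N}

instance (M N : ℕ) : Finite (MSeq M N) := by
  apply Finite.of_injective
    (fun f : MSeq M N => fun k => (⟨f.1 k, Nat.lt_succ_of_le (f.2.2 k)⟩ : Fin (N + 1)))
  intro f g h
  apply Subtype.ext
  funext k
  simpa using congrFun h k

lemma monotone_snoc {M : ℕ} {f : Fin M → ℕ} {j : ℕ} (hf : Monotone f) (hj : ∀ k, f k ≤ j) :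
    Monotone (Fin.snoc f j) := by
  intro a b hab
  cases b using Fin.lastCases with
  | last =>
    cases a using Fin.lastCases with
    | last => exact le_rfl
    | cast i => simpa [Fin.snoc_castSucc, Fin.snoc_last] using hj i
  | cast i' =>
    cases a using Fin.lastCases with
    | last => exact absurd hab (Fin.castSucc_lt_last i').not_ge
    | cast i =>
      simp only [Fin.snoc_castSucc]
      exact hf (Fin.castSucc_le_castSucc_iff.mp hab)

lemma card_MSeq : ∀ M N : ℕ, Nat.card (MSeq M N) = (N + M).choose M := by
  intro M
  induction M with
  | zero =>
    intro N
    have : Unique (MSeq 0 N) := by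
      refine ⟨⟨⟨fun k => k.elim0, fun a => a.elim0, fun k => k.elim0⟩⟩, ?_⟩
      intro f
      apply Subtype.ext
      funext k
      exact k.elim0
    simp [Nat.card_unique]
  | succ M ih =>
    intro N
    have e : MSeq (M + 1) N ≃ Σ j : Fin (N + 1), MSeq M j :=
      { toFun := fun f => ⟨⟨f.1 (Fin.last M), Nat.lt_succ_of_le (f.2.2 _)⟩,
          ⟨Fin.init f.1, fun a b hab => f.2.1 (Fin.castSucc_le_castSucc_iff.mpr hab),
           fun k => f.2.1 (Fin.le_last _)⟩⟩
        invFun := fun x => ⟨Fin.snoc x.2.1 (x.1 : ℕ),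
          monotone_snoc x.2.2.1 x.2.2.2,
          by
            intro k
            cases k using Fin.lastCases with
            | last => simpa [Fin.snoc_last] using Nat.lt_succ_iff.mp x.1.isLt
            | cast i =>
              simp only [Fin.snoc_castSucc]
              exact (x.2.2.2 i).trans (Nat.lt_succ_iff.mp x.1.isLt)⟩
        left_inv := fun f => Subtype.ext (Fin.snoc_init_self f.1)
        right_inv := fun x => by
          refine Sigma.subtype_ext (Fin.ext ?_) (by simp [Fin.init_snoc])
          simp [Fin.snoc_last] }
    rw [Nat.card_congr e]
    letI : ∀ j : Fin (N + 1), Fintype (MSeq M (j : ℕ)) := fun j => Fintype.ofFinite _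
    rw [Nat.card_eq_fintype_card, Fintype.card_sigma]
    have h1 : ∀ j : Fin (N + 1), Fintype.card (MSeq M (j : ℕ)) = ((j : ℕ) + M).choose M := by
      intro j
      rw [← Nat.card_eq_fintype_card, ih]
    simp only [h1]
    rw [Fin.sum_univ_eq_sum_range (fun j => (j + M).choose M) (N + 1)]
    have h2 : ∑ i ∈ Finset.Icc M (N + M), i.choose M
        = ∑ i ∈ Finset.range (N + 1), (i + M).choose M := by
      rw [← Finset.Ico_add_one_right_eq_Icc, Finset.sum_Ico_eq_sum_range]
      have : N + M + 1 - M = N + 1 := by omega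
      rw [this]
      exact Finset.sum_congr rfl fun i _ => by rw [Nat.add_comm M i]
    rw [← h2, Nat.sum_Icc_choose, Nat.add_assoc]

/-- monotone sequences with bounded top (= last) value -/
abbrev MSeqT (M' N : ℕ) := {f : Fin (M' + 1) → ℕ // Monotone f ∧ f (Fin.last M') ≤ N}

lemma top_iff {M' N : ℕ} {f : Fin (M' + 1) → ℕ} (hf : Monotone f) :
    f (Fin.last M') ≤ N ↔ ∀ k, f k ≤ N :=
  ⟨fun h k => (hf (Fin.le_last k)).trans h, fun h => h _⟩

def eqT (M' N : ℕ) : MSeqT M' N ≃ MSeq (M' + 1) N :=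
  Equiv.subtypeEquivRight fun f => and_congr_right fun hf => top_iff hf

instance (M' N : ℕ) : Finite (MSeqT M' N) := Finite.of_equiv _ (eqT M' N).symm

lemma card_MSeqT (M' N : ℕ) : Nat.card (MSeqT M' N) = (N + (M' + 1)).choose (M' + 1) := by
  rw [Nat.card_congr (eqT M' N), card_MSeq]

lemma card_top0 (M' : ℕ) : Nat.card {b : MSeqT M' 1 // b.1 (Fin.last M') = 0} = 1 := by
  rw [Nat.card_eq_one_iff_unique]
  constructor
  · refine ⟨fun b c => ?_⟩
    apply Subtype.ext; apply Subtype.ext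
    funext k
    have hb' := b.1.2.1 (Fin.le_last k)
    have hc' := c.1.2.1 (Fin.le_last k)
    rw [b.2] at hb'
    rw [c.2] at hc'
    omega
  · exact ⟨⟨⟨fun _ => 0, monotone_const, by simp⟩, rfl⟩⟩

lemma card_top1 (M' : ℕ) : Nat.card {b : MSeqT M' 1 // b.1 (Fin.last M') = 1} = M' + 1 := by
  classical
  have h := Nat.card_congr (Equiv.sumCompl (fun b : MSeqT M' 1 => b.1 (Fin.last M') = 0))
  rw [Nat.card_sum, card_top0, card_MSeqT] at h
  have e : {b : MSeqT M' 1 // ¬ b.1 (Fin.last M') = 0} ≃ {b : MSeqT M' 1 // b.1 (Fin.last M') = 1} :=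
    Equiv.subtypeEquivRight fun b => by
      have := b.2.2
      omega
  rw [Nat.card_congr e] at h
  have hc : (1 + (M' + 1)).choose (M' + 1) = M' + 2 := by
    have : 1 + (M' + 1) = (M' + 1) + 1 := by omega
    rw [this, Nat.choose_succ_self_right]
  omega

def Cond (M' p N : ℕ) (gf : (Fin p → (Fin (M' + 1) → ℕ)) × (Fin (M' + 1) → ℕ)) : Prop :=
  (∀ i, Monotone (gf.1 i)) ∧ (∀ i, gf.1 i (Fin.last M') ≤ 1) ∧ Monotone gf.2 ∧
    (∑ i, gf.1 i (Fin.last M')) + gf.2 (Fin.last M') ≤ N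

abbrev X (M' p N : ℕ) := Subtype (Cond M' p N)

instance (M' p N : ℕ) : Finite (X M' p N) := by
  apply Finite.of_injective (fun x : X M' p N =>
    (((fun i => (⟨x.1.1 i, x.2.1 i, x.2.2.1 i⟩ : MSeqT M' 1)) : Fin p → MSeqT M' 1),
      (⟨x.1.2, x.2.2.2.1, by
        have := x.2.2.2.2
        omega⟩ : MSeqT M' N)))
  intro x y h
  obtain ⟨h1, h2⟩ := Prod.mk.injEq .. ▸ h
  apply Subtype.ext
  apply Prod.ext
  · funext i
    exact congrArg Subtype.val (congrFun h1 i)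
  · exact congrArg Subtype.val h2

def baseEquiv (M' N : ℕ) : X M' 0 N ≃ MSeqT M' N where
  toFun x := ⟨x.1.2, x.2.2.2.1, by have := x.2.2.2.2; simpa using this⟩
  invFun f := ⟨(fun i => i.elim0, f.1), fun i => i.elim0, fun i => i.elim0, f.2.1, by
    simpa using f.2.2⟩
  left_inv x := by
    apply Subtype.ext
    apply Prod.ext
    · funext i; exact i.elim0
    · rfl
  right_inv f := rfl

def peelEquiv (M' p N : ℕ) (hN : 1 ≤ N) :
    X M' (p + 1) N ≃ Σ b : MSeqT M' 1, X M' p (N - b.1 (Fin.last M')) where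
  toFun x :=
    ⟨⟨x.1.1 0, x.2.1 0, x.2.2.1 0⟩,
      ⟨((fun i => x.1.1 i.succ), x.1.2),
        fun i => x.2.1 _, fun i => x.2.2.1 _, x.2.2.2.1, by
          have h0 := x.2.2.2.2
          rw [Fin.sum_univ_succ] at h0
          show (∑ i : Fin p, x.1.1 i.succ (Fin.last M')) + x.1.2 (Fin.last M')
            ≤ N - x.1.1 0 (Fin.last M')
          omega⟩⟩
  invFun y :=
    ⟨(Fin.cons y.1.1 y.2.1.1, y.2.1.2),
      fun i => by
        cases i using Fin.cases with
        | zero => simpa using y.1.2.1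
        | succ i => simpa using y.2.2.1 i,
      fun i => by
        cases i using Fin.cases with
        | zero => simpa using y.1.2.2
        | succ i => simpa using y.2.2.2.1 i,
      y.2.2.2.2.1, by
        rw [Fin.sum_univ_succ]
        simp only [Fin.cons_zero, Fin.cons_succ]
        have h1 := y.2.2.2.2.2
        have h2 := y.1.2.2
        omega⟩
  left_inv x := by
    apply Subtype.ext
    apply Prod.ext
    · exact Fin.cons_self_tail x.1.1
    · rfl
  right_inv y := by
    obtain ⟨⟨b, hb⟩, ⟨⟨g, f⟩, hx⟩⟩ := y
    refine Sigma.subtype_ext (Subtype.ext ?_) ?_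
    · exact Fin.cons_zero (α := fun _ => Fin (M' + 1) → ℕ) b g
    · apply Prod.ext
      · funext i
        exact Fin.cons_succ (α := fun _ => Fin (M' + 1) → ℕ) b g i
      · rfl

lemma pascal_step (p A : ℕ) (c : ℕ → ℕ) :
    (∑ k ∈ range (p + 1), p.choose k * A ^ k * c k)
      + A * ∑ k ∈ range (p + 1), p.choose k * A ^ k * c (k + 1)
      = ∑ k ∈ range (p + 2), (p + 1).choose k * A ^ k * c k := by
  rw [Finset.sum_range_succ' (fun k => (p + 1).choose k * A ^ k * c k) (p + 1)]
  simp only [Nat.choose_succ_succ, add_mul, pow_succ, Nat.succ_eq_add_one]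
  rw [Finset.sum_add_distrib]
  have h1 : ∑ i ∈ range (p + 1), p.choose i * (A ^ i * A) * c (i + 1)
      = A * ∑ k ∈ range (p + 1), p.choose k * A ^ k * c (k + 1) := by
    rw [Finset.mul_sum]
    exact Finset.sum_congr rfl fun i _ => by ring
  have h2 : (∑ i ∈ range (p + 1), p.choose (i + 1) * (A ^ i * A) * c (i + 1))
        + (p + 1).choose 0 * A ^ 0 * c 0
      = ∑ k ∈ range (p + 1), p.choose k * A ^ k * c k := by
    have h3 := Finset.sum_range_succ' (fun k => p.choose k * A ^ k * c k) (p + 1)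
    rw [Finset.sum_range_succ (fun k => p.choose k * A ^ k * c k) (p + 1)] at h3
    simp only [Nat.choose_succ_self, zero_mul] at h3
    rw [add_zero] at h3
    rw [h3]
    have : ∑ i ∈ range (p + 1), p.choose (i + 1) * (A ^ i * A) * c (i + 1)
        = ∑ k ∈ range (p + 1), p.choose (k + 1) * A ^ (k + 1) * c (k + 1) :=
      Finset.sum_congr rfl fun i _ => by rw [pow_succ]
    rw [this]
    simp
  omega

lemma card_X (M' : ℕ) : ∀ p N : ℕ, p ≤ N → Nat.card (X M' p N) =
    ∑ k ∈ range (p + 1), p.choose k * (M' + 1) ^ k * ((N - k) + (M' + 1)).choose (M' + 1) := by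
  intro p
  induction p with
  | zero =>
    intro N _
    rw [Nat.card_congr (baseEquiv M' N), card_MSeqT]
    simp
  | succ p ih =>
    intro N hpN
    classical
    have hN : 1 ≤ N := by omega
    rw [Nat.card_congr (peelEquiv M' p N hN)]
    letI : Fintype (MSeqT M' 1) := Fintype.ofFinite _
    letI : ∀ b : MSeqT M' 1, Fintype (X M' p (N - b.1 (Fin.last M'))) :=
      fun b => Fintype.ofFinite _
    rw [Nat.card_eq_fintype_card, Fintype.card_sigma]
    have hcard : ∀ b : MSeqT M' 1, Fintype.card (X M' p (N - b.1 (Fin.last M')))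
        = ∑ k ∈ range (p + 1),
            p.choose k * (M' + 1) ^ k
              * ((N - b.1 (Fin.last M') - k) + (M' + 1)).choose (M' + 1) := by
      intro b
      rw [← Nat.card_eq_fintype_card, ih _ (by have := b.2.2; omega)]
    simp only [hcard]
    rw [← Finset.sum_filter_add_sum_filter_not Finset.univ
      (fun b : MSeqT M' 1 => b.1 (Fin.last M') = 0)]
    have e0 : ∑ b ∈ Finset.univ.filter (fun b : MSeqT M' 1 => b.1 (Fin.last M') = 0),
          (∑ k ∈ range (p + 1), p.choose k * (M' + 1) ^ k
            * ((N - b.1 (Fin.last M') - k) + (M' + 1)).choose (M' + 1))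
        = ∑ k ∈ range (p + 1),
            p.choose k * (M' + 1) ^ k * ((N - k) + (M' + 1)).choose (M' + 1) := by
      rw [Finset.sum_congr rfl (fun b hb => ?_), Finset.sum_const]
      · have hc : (Finset.univ.filter (fun b : MSeqT M' 1 => b.1 (Fin.last M') = 0)).card
            = 1 := by
          rw [← Fintype.card_subtype, ← Nat.card_eq_fintype_card, card_top0]
        rw [hc, one_smul]
      · rw [(Finset.mem_filter.mp hb).2]
        simp
    have e1 : ∑ b ∈ Finset.univ.filter (fun b : MSeqT M' 1 => ¬ b.1 (Fin.last M') = 0),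
          (∑ k ∈ range (p + 1), p.choose k * (M' + 1) ^ k
            * ((N - b.1 (Fin.last M') - k) + (M' + 1)).choose (M' + 1))
        = (M' + 1) * ∑ k ∈ range (p + 1),
            p.choose k * (M' + 1) ^ k * ((N - (k + 1)) + (M' + 1)).choose (M' + 1) := by
      rw [Finset.sum_congr rfl (fun b hb => ?_), Finset.sum_const]
      · have hc : (Finset.univ.filter (fun b : MSeqT M' 1 => ¬ b.1 (Fin.last M') = 0)).card
            = M' + 1 := by
          rw [← Fintype.card_subtype, ← Nat.card_eq_fintype_card]
          rw [Nat.card_congr (Equiv.subtypeEquivRight (q := fun b : MSeqT M' 1 =>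
            b.1 (Fin.last M') = 1) (fun b => by have := b.2.2; omega))]
          exact card_top1 M'
        rw [hc, smul_eq_mul]
      · have hb1 : b.1 (Fin.last M') = 1 := by
          have := b.2.2
          have := (Finset.mem_filter.mp hb).2
          omega
        rw [hb1]
        exact Finset.sum_congr rfl fun k _ => by
          congr 2
          omega
    rw [e0, e1]
    exact pascal_step p (M' + 1) (fun k => ((N - k) + (M' + 1)).choose (M' + 1))

def mainEquiv (M' n' : ℕ) :
    {e : Fin (M' + 1) → (Fin (n' + 1) → ℕ) // Monotone e ∧ ∀ k, e k ∈ Ptn (n' + 1)}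
      ≃ X M' n' (n' + 1) where
  toFun e := ⟨((fun i k => e.1 k i.castSucc), fun k => e.1 k (Fin.last n')),
    fun i => monotone_iff_apply₂.mp e.2.1 i.castSucc,
    fun i => (e.2.2 (Fin.last M')).1 i.castSucc (by simpa using i.isLt),
    monotone_iff_apply₂.mp e.2.1 (Fin.last n'),
    by
      have h := (e.2.2 (Fin.last M')).2
      rw [Fin.sum_univ_castSucc] at h
      exact h⟩
  invFun x := ⟨fun k => Fin.snoc (fun i => x.1.1 i k) (x.1.2 k), by
    refine ⟨monotone_iff_apply₂.mpr fun i => ?_, fun k => ⟨fun i hi => ?_, ?_⟩⟩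
    · cases i using Fin.lastCases with
      | last => simp only [Fin.snoc_last]; exact x.2.2.2.1
      | cast j => simp only [Fin.snoc_castSucc]; exact x.2.1 j
    · have hj : (i : ℕ) < n' := hi
      have hij : i = Fin.castSucc ⟨(i : ℕ), hj⟩ := Fin.ext rfl
      rw [hij]
      simp only [Fin.snoc_castSucc]
      exact (x.2.1 _ (Fin.le_last k)).trans (x.2.2.1 _)
    · rw [Fin.sum_univ_castSucc]
      simp only [Fin.snoc_castSucc, Fin.snoc_last]
      exact le_trans
        (Nat.add_le_add (Finset.sum_le_sum fun i _ => x.2.1 i (Fin.le_last k))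
          (x.2.2.2.1 (Fin.le_last k)))
        x.2.2.2.2⟩
  left_inv e := by
    apply Subtype.ext
    funext k i
    cases i using Fin.lastCases with
    | last => simp
    | cast j => simp
  right_inv x := by
    apply Subtype.ext
    apply Prod.ext
    · funext i k
      simp
    · funext k
      simp

end PtnAux

/-- For all integers `n ≥ 2` and `m ≥ 2`, the number of multichains
`e₁ ≤ e₂ ≤ ⋯ ≤ e_{m-1}` in the poset `P_{t_n}` equals
`∑_{k=0}^{n-1} C(n-1, k) * (m-1)^k * C(m+n-k-1, n-k)`. -/
theorem stmt0 (n m : ℕ) (hn : 2 ≤ n) (hm : 2 ≤ m) :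
    Nat.card {e : Fin (m - 1) → (Fin n → ℕ) // Monotone e ∧ ∀ k, e k ∈ Ptn n} =
      ∑ k ∈ Finset.range n,
        Nat.choose (n - 1) k * (m - 1) ^ k * Nat.choose (m + n - k - 1) (n - k) := by
  obtain ⟨M', rfl⟩ : ∃ M', m = M' + 2 := ⟨m - 2, by omega⟩
  obtain ⟨n', rfl⟩ : ∃ n', n = n' + 1 := ⟨n - 1, by omega⟩
  have h1 : Nat.card {e : Fin (M' + 2 - 1) → (Fin (n' + 1) → ℕ) //
        Monotone e ∧ ∀ k, e k ∈ Ptn (n' + 1)} = Nat.card (PtnAux.X M' n' (n' + 1)) :=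
    Nat.card_congr (PtnAux.mainEquiv M' n')
  rw [h1, PtnAux.card_X M' n' (n' + 1) (Nat.le_succ n')]
  apply Finset.sum_congr rfl
  intro k hk
  have hk' : k ≤ n' := Nat.lt_succ_iff.mp (Finset.mem_range.mp hk)
  have e1 : M' + 2 + (n' + 1) - k - 1 = (n' + 1 - k) + (M' + 1) := by
    clear h1 hk
    omega
  have e4 : (n' + 1 - k) + (M' + 1) - (M' + 1) = n' + 1 - k := by
    clear h1 hk
    omega
  have e3 := Nat.choose_symm (Nat.le_add_left (M' + 1) (n' + 1 - k))
  rw [e4] at e3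
  rw [e1, e3]
  rfl
end

section
/- Fix an integer m ≥ 2, and for each integer n ≥ 1 let Z_n(m) denote the number of multichains e_1 ≤ e_2 ≤ ⋯ ≤ e_{m-1} in the poset P_{t_n}. Then in the ring of formal power series ℚ[[s]] one has the identity (1 - m·s)^m · (1 + ∑_{n ≥ 1} Z_n(m) s^n) = (1 + s - m·s)^m. -/
/-- The number `Z_n(m)` of multichains `e₁ ≤ ⋯ ≤ e_{m-1}` in `P_{t_n}`. -/
noncomputable def Zcount (n m : ℕ) : ℕ :=
  Nat.card {e : Fin (m - 1) → (Fin n → ℕ) // Monotone e ∧ ∀ k, e k ∈ Ptn n}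

/-!
Write `p = m - 1` and `n = L + 1`. Read coordinate by coordinate, a multichain `e₁ ≤ ⋯ ≤ e_p` in
`P_{t_n}` consists of `L` monotone `0/1` sequences (`p + 1` choices each, one of them zero) and a
last monotone sequence bounded by one more than the number of zero sequences among the others.
As there are `C(N + p, p)` monotone sequences of length `p` bounded by `N`, this gives
`Z_{L+1}(m) = ∑_{i+j=L} C(L,i) pⁱ C(j+1+p, p) = T_q c(· + 1) (L)`, where `q = m - 1`,
`c(j) = C(j + p, p)` and `T_q c (n) = ∑_{i+j=n} C(n,i) qⁱ c(j)` is the binomial transform. Its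
recursion `T_q c (n + 1) = T_q c(· + 1) (n) + q T_q c (n)` and `c(0) = 1` turn this into
`1 + ∑ Z_n sⁿ = (1 - qs) ∑ T_q c (n) sⁿ`; together with Pascal's rule the same recursion gives
`(1 - ms)^(d+1) ∑ T_q c_d (n) sⁿ = (1 - qs)^d` for `c_d(j) = C(j + d, d)` by induction on `d`.
-/

open Finset PowerSeries

theorem StrictMono.apply_add_le_apply_add {p : ℕ} {f : Fin p → ℕ} (hf : StrictMono f)
    {i j : Fin p} (hij : i ≤ j) : f i + j ≤ f j + i := by
  obtain ⟨d, hd⟩ : ∃ d, (j : ℕ) = i + d := ⟨j - i, by omega⟩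
  induction d generalizing j with
  | zero => rw [Fin.ext hd]
  | succ d ih =>
    let j' : Fin p := ⟨i + d, by omega⟩
    have h1 : f i + (i + d) ≤ f j' + i := ih (j := j') (Fin.le_def.mpr (by simp [j'])) rfl
    have h2 : f j' < f j := hf (Fin.lt_def.mpr (by simp [j']; omega))
    omega

section CommSemiring

variable {R : Type*} [CommSemiring R]

def binomialTransform (q : R) (c : ℕ → R) (n : ℕ) : R :=
  ∑ ij ∈ antidiagonal n, (n.choose ij.1 : R) * q ^ ij.1 * c ij.2

theorem binomialTransform_zero (q : R) (c : ℕ → R) : binomialTransform q c 0 = c 0 := by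
  simp [binomialTransform]

theorem binomialTransform_succ (q : R) (c : ℕ → R) (n : ℕ) :
    binomialTransform q c (n + 1) =
      binomialTransform q (fun j => c (j + 1)) n + q * binomialTransform q c n := by
  simp only [binomialTransform, mul_assoc]
  rw [sum_antidiagonal_choose_succ_mul (fun i j => q ^ i * c j), mul_sum]
  congr 1
  refine sum_congr rfl fun ij hij => ?_
  rw [Nat.choose_symm_of_eq_add (mem_antidiagonal.mp hij).symm, pow_succ]
  ring

theorem sum_fun_card_filter_eq_binomialTransform {B : Type*} [Fintype B] [DecidableEq B]
    (b₀ : B) {q : ℕ} (hB : Fintype.card B = q + 1) (g : ℕ → R) (L : ℕ) :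
    ∑ a : Fin L → B, g #{i | a i = b₀} = binomialTransform (q : R) g L := by
  induction L generalizing g with
  | zero => simp [binomialTransform_zero]
  | succ L ih =>
    rw [← (Fin.consEquiv fun _ => B).sum_comp, Fintype.sum_prod_type,
      Fintype.sum_eq_add_sum_compl b₀, binomialTransform_succ, ← ih, ← ih]
    simp only [Fin.consEquiv_apply, Fin.card_filter_univ_succ, Fin.cons_zero, Fin.cons_succ,
      if_true]
    have hrest : ∀ b ∈ ({b₀}ᶜ : Finset B),
        ∑ a : Fin L → B, g (if b = b₀ then #{i | a i = b₀} + 1 else #{i | a i = b₀}) =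
          ∑ a : Fin L → B, g #{i | a i = b₀} := fun b hb => by
      simp only [if_neg (by simpa using hb : b ≠ b₀)]
    rw [sum_congr rfl hrest, sum_const, card_compl, card_singleton, hB, Nat.add_sub_cancel,
      nsmul_eq_mul]

end CommSemiring

section CommRing

variable {R : Type*} [CommRing R]

theorem binomialTransform_sub (q : R) (c c' : ℕ → R) (n : ℕ) :
    binomialTransform q (fun j => c j - c' j) n =
      binomialTransform q c n - binomialTransform q c' n := by
  simp only [binomialTransform, mul_sub, sum_sub_distrib]

theorem one_sub_mul_mk_binomialTransform (q : R) (c : ℕ → R) :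
    (1 - C q * X) * PowerSeries.mk (binomialTransform q c) =
      C (c 0) + X * PowerSeries.mk (binomialTransform q fun j => c (j + 1)) := by
  ext (_ | n)
  · simp [binomialTransform_zero]
  · simp [sub_mul, binomialTransform_succ, mul_assoc]

theorem one_sub_succ_mul_mk_binomialTransform (q : R) (c : ℕ → R) :
    (1 - C (q + 1) * X) * PowerSeries.mk (binomialTransform q c) =
      C (c 0) + X * PowerSeries.mk (binomialTransform q fun j => c (j + 1) - c j) := by
  ext (_ | n)
  · simp [binomialTransform_zero]
  · simp [add_mul, sub_mul, mul_assoc, binomialTransform_succ, binomialTransform_sub]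
    ring

/- `∑ C(j + d, d) Xʲ = (1 - X)^-(d+1)`, and the binomial transform substitutes `X / (1 - qX)`
for `X` and divides by `1 - qX`. -/
theorem one_sub_succ_pow_mul_mk_binomialTransform_choose (q : R) (d : ℕ) :
    (1 - C (q + 1) * X) ^ (d + 1) *
        PowerSeries.mk (binomialTransform q fun j => ((j + d).choose d : R)) =
      (1 - C q * X) ^ d := by
  induction d with
  | zero =>
    rw [zero_add, pow_one, one_sub_succ_mul_mk_binomialTransform]
    ext (_ | n) <;> simp [binomialTransform]
  | succ d ih =>
    have hpascal : (fun j => ((j + 1 + (d + 1)).choose (d + 1) : R) -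
        ((j + (d + 1)).choose (d + 1) : R)) = fun j => ((j + 1 + d).choose d : R) := by
      funext j
      rw [show j + 1 + (d + 1) = j + 1 + d + 1 by omega, show j + (d + 1) = j + 1 + d by omega,
        Nat.choose_succ_succ', Nat.cast_add, add_sub_cancel_right]
    have hstep : (1 - C (q + 1) * X) *
          PowerSeries.mk (binomialTransform q fun j => ((j + (d + 1)).choose (d + 1) : R)) =
        (1 - C q * X) * PowerSeries.mk (binomialTransform q fun j => ((j + d).choose d : R)) := by
      rw [one_sub_succ_mul_mk_binomialTransform, one_sub_mul_mk_binomialTransform, hpascal]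
      simp
    rw [pow_succ, mul_assoc, hstep, mul_left_comm, ih, pow_succ']

end CommRing

abbrev BoundedMonotone (p N : ℕ) : Type := {c : Fin p → ℕ // Monotone c ∧ ∀ k, c k ≤ N}

namespace BoundedMonotone

def equivOrderEmbedding (p N : ℕ) : BoundedMonotone p N ≃ (Fin p ↪o Fin (N + p)) where
  toFun c := OrderEmbedding.ofStrictMono (fun k => ⟨c.1 k + k, by have := c.2.2 k; omega⟩)
    fun i j hij => by
      have := c.2.1 hij.le
      simp only [Fin.mk_lt_mk]
      omega
  invFun f := ⟨fun k => f k - k,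
    fun i j hij => by
      have := (Fin.val_strictMono.comp f.strictMono).apply_add_le_apply_add hij
      dsimp only [Function.comp_apply] at this ⊢
      omega,
    fun k => by
      have hk := k.isLt
      have hf := (Fin.val_strictMono.comp f.strictMono).apply_add_le_apply_add
        (i := k) (j := ⟨p - 1, by omega⟩) (Fin.le_def.mpr (by dsimp only; omega))
      have hlt := (f ⟨p - 1, by omega⟩).isLt
      dsimp only [Function.comp_apply] at hf ⊢
      omega⟩
  left_inv c := by
    ext k
    exact Nat.add_sub_cancel (c.1 k) k
  right_inv f := by
    ext k
    have := (Fin.val_strictMono.comp f.strictMono).apply_add_le_apply_add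
      (i := ⟨0, k.pos⟩) (Fin.le_def.mpr (Nat.zero_le k))
    dsimp only [Function.comp_apply] at this
    exact Nat.sub_add_cancel (by omega)

instance (p N : ℕ) : Finite (BoundedMonotone p N) :=
  .of_equiv _ (equivOrderEmbedding p N).symm

noncomputable instance (p N : ℕ) : Fintype (BoundedMonotone p N) := .ofFinite _

theorem card (p N : ℕ) : Nat.card (BoundedMonotone p N) = (N + p).choose p := by
  rw [Nat.card_congr ((equivOrderEmbedding p N).trans Set.powersetCard.ofFinEmbEquiv),
    Set.powersetCard.card, Nat.card_fin]

def zero (p N : ℕ) : BoundedMonotone p N := ⟨0, monotone_const, fun _ => N.zero_le⟩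

theorem apply_last_eq_ite {p : ℕ} (a : BoundedMonotone (p + 1) 1) :
    a.1 (Fin.last p) = if a = zero (p + 1) 1 then 0 else 1 := by
  split_ifs with ha
  · rw [ha]
    rfl
  · have hle := a.2.2 (Fin.last p)
    by_contra hne
    refine ha (Subtype.ext (funext fun k => ?_))
    have := a.2.1 (Fin.le_last k)
    show a.1 k = 0
    omega

theorem sum_apply_last_add_card_eq_zero {p L : ℕ} (a : Fin L → BoundedMonotone (p + 1) 1) :
    ∑ i, (a i).1 (Fin.last p) + #{i | a i = zero (p + 1) 1} = L := by
  simp_rw [apply_last_eq_ite, sum_ite, sum_const_zero, sum_const, smul_eq_mul, mul_one,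
    zero_add]
  rw [add_comm, card_filter_add_card_filter_not, card_univ, Fintype.card_fin]

end BoundedMonotone

abbrev PtnMultichain (p n : ℕ) : Type :=
  {e : Fin p → (Fin n → ℕ) // Monotone e ∧ ∀ k, e k ∈ Ptn n}

namespace PtnMultichain

/-- The sum constraint on the top element `e_p` becomes a bound on its last coordinate alone,
because `e_p i` (for `i < L`) is `0` or `1` according as the `i`-th coordinate sequence is zero. -/
def equivInitLast (p L : ℕ) :
    PtnMultichain (p + 1) (L + 1) ≃
      {x : (Fin L → BoundedMonotone (p + 1) 1) × (Fin (p + 1) → ℕ) //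
        Monotone x.2 ∧ ∀ k, x.2 k ≤ #{i | x.1 i = .zero (p + 1) 1} + 1} where
  toFun e := ⟨(fun i => ⟨fun k => e.1 k i.castSucc, fun _ _ h => e.2.1 h _,
      fun k => (e.2.2 k).1 _ (by simp)⟩, fun k => e.1 k (Fin.last L)),
    fun _ _ h => e.2.1 h _, fun k => by
      have hsum := (e.2.2 (Fin.last p)).2
      rw [Fin.sum_univ_castSucc] at hsum
      have hcount := BoundedMonotone.sum_apply_last_add_card_eq_zero
        fun i => ⟨fun k => e.1 k i.castSucc, fun _ _ h => e.2.1 h _,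
          fun k => (e.2.2 k).1 _ (by simp)⟩
      have hmono := e.2.1 (Fin.le_last k) (Fin.last L)
      dsimp only at hcount hmono ⊢
      omega⟩
  invFun x := ⟨fun k => Fin.snoc (fun i => (x.1.1 i).1 k) (x.1.2 k),
    fun k k' h j => by
      induction j using Fin.lastCases with
      | last => simpa using x.2.1 h
      | cast i => simpa using (x.1.1 i).2.1 h,
    fun k => by
      refine ⟨fun j hj => ?_, ?_⟩
      · induction j using Fin.lastCases with
        | last => simp at hj
        | cast i => simpa using (x.1.1 i).2.2 k
      · rw [Fin.sum_univ_castSucc]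
        simp only [Fin.snoc_castSucc, Fin.snoc_last]
        have hcount := BoundedMonotone.sum_apply_last_add_card_eq_zero x.1.1
        have hmono := sum_le_sum fun i (_ : i ∈ univ) => (x.1.1 i).2.1 (Fin.le_last k)
        have hbound := x.2.2 k
        omega⟩
  left_inv e := by
    ext k j
    induction j using Fin.lastCases with
    | last => simp
    | cast i => simp
  right_inv x := by
    ext <;> simp

theorem card_eq_binomialTransform {R : Type*} [CommSemiring R] (p L : ℕ) :
    (Nat.card (PtnMultichain (p + 1) (L + 1)) : R) =
      binomialTransform ((p + 1 : ℕ) : R) (fun j => ((j + 1 + (p + 1)).choose (p + 1) : R)) L := by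
  have hcard : Fintype.card (BoundedMonotone (p + 1) 1) = p + 1 + 1 := by
    rw [Fintype.card_eq_nat_card, BoundedMonotone.card, add_comm 1, Nat.choose_succ_self_right]
  rw [Nat.card_congr ((equivInitLast p L).trans (Equiv.subtypeProdEquivSigmaSubtype
      fun (a : Fin L → BoundedMonotone (p + 1) 1) (c : Fin (p + 1) → ℕ) =>
        Monotone c ∧ ∀ k, c k ≤ #{i | a i = .zero (p + 1) 1} + 1)),
    Nat.card_sigma, Nat.cast_sum, ← sum_fun_card_filter_eq_binomialTransform (.zero _ _) hcard]
  simp only [BoundedMonotone.card]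

end PtnMultichain

/-- Fix `m ≥ 2`. In `ℚ[[s]]` one has
`(1 - m s)^m * (1 + ∑_{n ≥ 1} Z_n(m) sⁿ) = (1 + s - m s)^m`, where the power series
`PowerSeries.mk (fun n => if n = 0 then 1 else Z_n(m))` is `1 + ∑_{n ≥ 1} Z_n(m) sⁿ`. -/
theorem stmt1 (m : ℕ) (hm : 2 ≤ m) :
    (1 - (m : PowerSeries ℚ) * PowerSeries.X) ^ m *
      PowerSeries.mk (fun n => if n = 0 then 1 else (Zcount n m : ℚ)) =
    (1 + PowerSeries.X - (m : PowerSeries ℚ) * PowerSeries.X) ^ m := by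
  obtain ⟨p, rfl⟩ : ∃ p, m = p + 1 + 1 := ⟨m - 2, by omega⟩
  set q : ℚ := ((p + 1 : ℕ) : ℚ)
  have hmC : ((p + 1 + 1 : ℕ) : PowerSeries ℚ) = C (q + 1) := by simp [q]
  have hseries : PowerSeries.mk (fun n => if n = 0 then 1 else (Zcount n (p + 1 + 1) : ℚ)) =
      (1 - C q * X) *
        PowerSeries.mk (binomialTransform q fun j => ((j + (p + 1)).choose (p + 1) : ℚ)) := by
    rw [one_sub_mul_mk_binomialTransform]
    ext (_ | n)
    · simp
    · simp only [coeff_mk, map_add, coeff_C, coeff_succ_X_mul, if_neg n.succ_ne_zero, zero_add]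
      exact PtnMultichain.card_eq_binomialTransform p n
  rw [hseries, hmC, mul_left_comm, one_sub_succ_pow_mul_mk_binomialTransform_choose, ← pow_succ',
    map_add, map_one]
  ring
end

section
/- For all integers n ≥ 1 and 0 ≤ j ≤ k ≤ n, the number of elements a of the poset P_{t_n} with nz(a) = j and ht(a) = k equals: C(n, j) if j = k; C(n-1, j-1) if 1 ≤ j < k; and 0 if j = 0 < k. -/
/-!
Write `nz(a)` for the number of nonzero coordinates and `ht(a)` for the coordinate sum.
Always `nz(a) ≤ ht(a)`, with equality exactly for 0/1-vectors, i.e. indicators of subsets.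
So the points with `nz = ht = j` are the indicators of `j`-subsets of `Fin n`. If `j < k`,
some coordinate is at least `2`, and in `P_{t_n}` this can only be the last one: such a
point is the indicator of a `(j - 1)`-subset of the first `n - 1` coordinates, followed by
the last coordinate `k - j + 1`. Finally `nz(a) = 0` forces `a = 0`.
-/

def PtnSlice (n j k : ℕ) : Set (Fin n → ℕ) :=
  {a | a ∈ Ptn n ∧ (Finset.univ.filter fun i => a i ≠ 0).card = j ∧ ∑ i, a i = k}

open Finset

section ZeroOne

variable {ι : Type*} [Fintype ι]

theorem sum_eq_card_filter_ne_zero_iff (a : ι → ℕ) :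
    ∑ i, a i = #{i | a i ≠ 0} ↔ ∀ i, a i ≤ 1 := by
  rw [← sum_filter_ne_zero, card_eq_sum_ones, eq_comm,
    sum_eq_sum_iff_of_le fun i hi => Nat.one_le_iff_ne_zero.2 (mem_filter.1 hi).2]
  refine forall_congr' fun i => ?_
  simp only [mem_filter, mem_univ, true_and]
  omega

variable [DecidableEq ι]

def zeroOneEquivFinset (j : ℕ) :
    {a : ι → ℕ // (∀ i, a i ≤ 1) ∧ #{i | a i ≠ 0} = j} ≃ {s : Finset ι // #s = j} where
  toFun a := ⟨univ.filter fun i => a.1 i ≠ 0, a.2.2⟩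
  invFun s := ⟨fun i => if i ∈ s.1 then 1 else 0, fun i => by dsimp only; split_ifs <;> omega,
    by simpa using s.2⟩
  left_inv a := by
    ext i
    have := a.2.1 i
    simp only [mem_filter, mem_univ, true_and]
    split_ifs <;> omega
  right_inv s := by
    ext i
    simp

theorem card_zeroOne_eq_choose (j : ℕ) :
    Nat.card {a : ι → ℕ // (∀ i, a i ≤ 1) ∧ #{i | a i ≠ 0} = j} = (Fintype.card ι).choose j := by
  rw [Nat.card_congr (zeroOneEquivFinset j), Nat.card_eq_fintype_card, Fintype.card_finset_len]

end ZeroOne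

section FinSucc

variable {m : ℕ}

theorem card_init_last_eq {α : Type*} (Q : (Fin m → α) → Prop) (c : α) :
    Nat.card {a : Fin (m + 1) → α // Q (Fin.init a) ∧ a (Fin.last m) = c} =
      Nat.card {b // Q b} :=
  Nat.card_congr
    { toFun a := ⟨Fin.init a.1, a.2.1⟩
      invFun b := ⟨Fin.snoc b.1 c, by simpa using b.2⟩
      left_inv a := by
        ext1
        simp [← a.2.2]
      right_inv b := by simp }

theorem card_filter_ne_zero_fin_succ (a : Fin (m + 1) → ℕ) :
    #{i | a i ≠ 0} = #{i | Fin.init a i ≠ 0} + if a (Fin.last m) ≠ 0 then 1 else 0 := by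
  rw [card_filter, card_filter, Fin.sum_univ_castSucc]
  rfl

theorem mem_Ptn_succ_iff (a : Fin (m + 1) → ℕ) :
    a ∈ Ptn (m + 1) ↔ (∀ i, Fin.init a i ≤ 1) ∧ ∑ i, a i ≤ m + 1 := by
  simp [Ptn, Fin.forall_fin_succ', Fin.init]

end FinSucc

theorem card_PtnSlice_self {n j : ℕ} (hj : j ≤ n) :
    Nat.card (PtnSlice n j j) = n.choose j := by
  have hslice : ∀ a, a ∈ PtnSlice n j j ↔ (∀ i, a i ≤ 1) ∧ #{i | a i ≠ 0} = j := by
    intro a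
    simp only [PtnSlice, Ptn, Set.mem_ofPred_eq]
    constructor
    · rintro ⟨-, hnz, hsum⟩
      exact ⟨(sum_eq_card_filter_ne_zero_iff a).1 (hsum.trans hnz.symm), hnz⟩
    · rintro ⟨hle, hnz⟩
      have hsum := (sum_eq_card_filter_ne_zero_iff a).2 hle
      exact ⟨⟨fun i _ => hle i, by omega⟩, hnz, by omega⟩
  rw [Nat.card_congr (Equiv.subtypeEquivRight hslice), card_zeroOne_eq_choose, Fintype.card_fin]

theorem card_PtnSlice_of_lt {m j k : ℕ} (hj : 1 ≤ j) (hjk : j < k) (hk : k ≤ m + 1) :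
    Nat.card (PtnSlice (m + 1) j k) = m.choose (j - 1) := by
  have hslice : ∀ a, a ∈ PtnSlice (m + 1) j k ↔
      ((∀ i, Fin.init a i ≤ 1) ∧ #{i | Fin.init a i ≠ 0} = j - 1) ∧
        a (Fin.last m) = k - j + 1 := by
    intro a
    have hnz := card_filter_ne_zero_fin_succ a
    have hsum : ∑ i, a i = ∑ i, Fin.init a i + a (Fin.last m) := Fin.sum_univ_castSucc a
    simp only [PtnSlice, Set.mem_ofPred_eq, mem_Ptn_succ_iff]
    constructor
    · rintro ⟨⟨hle, -⟩, hj', hk'⟩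
      have := (sum_eq_card_filter_ne_zero_iff _).2 hle
      refine ⟨⟨hle, ?_⟩, ?_⟩ <;> split_ifs at hnz <;> omega
    · rintro ⟨⟨hle, hj'⟩, hlast⟩
      have := (sum_eq_card_filter_ne_zero_iff _).2 hle
      refine ⟨⟨hle, ?_⟩, ?_, ?_⟩ <;> split_ifs at hnz <;> omega
  rw [Nat.card_congr (Equiv.subtypeEquivRight hslice),
    card_init_last_eq (fun b => (∀ i, b i ≤ 1) ∧ #{i | b i ≠ 0} = j - 1), card_zeroOne_eq_choose,
    Fintype.card_fin]

theorem card_PtnSlice_zero {n k : ℕ} (hk : k ≠ 0) : Nat.card (PtnSlice n 0 k) = 0 := by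
  rw [Nat.card_eq_zero]
  refine Or.inl ⟨?_⟩
  rintro ⟨a, -, hnz, hsum⟩
  rw [card_eq_zero, filter_eq_empty_iff] at hnz
  exact hk (by simpa [← hsum] using hnz)

theorem stmt3_general (n j k : ℕ) (hjk : j ≤ k) (hk : k ≤ n) :
    Nat.card {a : Fin n → ℕ // a ∈ Ptn n ∧
        (Finset.univ.filter fun i => a i ≠ 0).card = j ∧ ∑ i, a i = k} =
      if j = k then Nat.choose n j
      else if 1 ≤ j then Nat.choose (n - 1) (j - 1)
      else 0 := by
  change Nat.card (PtnSlice n j k) = _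
  split_ifs with hjk' hj
  · subst hjk'
    exact card_PtnSlice_self hk
  · obtain ⟨m, rfl⟩ : ∃ m, n = m + 1 := ⟨n - 1, by omega⟩
    exact card_PtnSlice_of_lt hj (by omega) hk
  · obtain rfl : j = 0 := by omega
    exact card_PtnSlice_zero (by omega)

/-- For all integers `n ≥ 1` and `0 ≤ j ≤ k ≤ n`, the number of elements `a` of `P_{t_n}`
with `nz(a) = j` (number of nonzero coordinates) and `ht(a) = k` (coordinate sum) equals
`C(n, j)` if `j = k`, `C(n-1, j-1)` if `1 ≤ j < k`, and `0` if `j = 0 < k`. -/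
theorem stmt3 (n j k : ℕ) (hn : 1 ≤ n) (hjk : j ≤ k) (hk : k ≤ n) :
    Nat.card {a : Fin n → ℕ // a ∈ Ptn n ∧
        (Finset.univ.filter fun i => a i ≠ 0).card = j ∧ ∑ i, a i = k} =
      if j = k then Nat.choose n j
      else if 1 ≤ j then Nat.choose (n - 1) (j - 1)
      else 0 :=
  stmt3_general n j k hjk hk
end

section
/- For every integer n ≥ 1, the polynomial K_{t_n}(X,Y) = ∑_{a ∈ P_{t_n}} X^{nz(a)} Y^{ht(a)} satisfies, in the polynomial ring ℤ[X,Y], the identity (1 - Y) · K_{t_n}(X,Y) = (1 - Y)(1 + XY)^n + X·Y^2·(1 + XY)^{n-1} - X·Y^2·(Y(1 + X))^{n-1}. -/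
/-!
Write `a ∈ P_{t_n}` as `a = (b, c)` with `b ∈ {0,1}^(n-1)` and `c ≤ n - |b|`. The sum over `c` is
geometric, so multiplying it by `1 - Y` telescopes it to `(XY)^|b| (1 - Y + XY) - X^(|b|+1) Y^(n+1)`.
Summing over `b` by the binomial theorem gives `(1 - Y + XY)(1 + XY)^(n-1) - XY^(n+1)(1 + X)^(n-1)`,
which is the right-hand side rearranged.
-/

open MvPolynomial

/-- The variable `X` of `ℤ[X,Y]` (realized as `MvPolynomial (Fin 2) ℤ`). -/
noncomputable def Xv : MvPolynomial (Fin 2) ℤ := MvPolynomial.X 0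

/-- The variable `Y` of `ℤ[X,Y]`. -/
noncomputable def Yv : MvPolynomial (Fin 2) ℤ := MvPolynomial.X 1

/-- The polynomial `K_{t_n}(X,Y) = ∑_{a ∈ P_{t_n}} X^{nz(a)} Y^{ht(a)}`, where the
(finite) sum ranges over the elements of `P_{t_n}`. -/
noncomputable def Kpoly (n : ℕ) : MvPolynomial (Fin 2) ℤ :=
  ∑ᶠ a ∈ Ptn n, Xv ^ (Finset.univ.filter fun i => a i ≠ 0).card * Yv ^ (∑ i, a i)

open Finset

theorem sum_piFinset_range_two_pow_sum {S : Type*} [CommSemiring S] (m : ℕ) (z : S) :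
    ∑ b ∈ Fintype.piFinset (fun _ : Fin m => range 2), z ^ ∑ j, b j = (1 + z) ^ m := by
  simp only [← prod_pow_eq_pow_sum, ← prod_univ_sum, sum_range_succ, sum_range_zero, zero_add,
    pow_zero, pow_one, prod_const, card_univ, Fintype.card_fin]

section

variable {R : Type*} [CommRing R]

theorem one_sub_mul_sum_range_pow_ite (x y : R) (M : ℕ) :
    (1 - y) * ∑ c ∈ range (M + 1), x ^ (if c = 0 then 0 else 1) * y ^ c =
      1 - y + x * y - x * y ^ (M + 1) := by
  have hgeom := mul_neg_geom_sum y M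
  simp only [sum_range_succ', Nat.succ_ne_zero, if_false, if_true, pow_succ, pow_zero,
    ← sum_mul, ← mul_sum]
  linear_combination (x * y) * hgeom

def ptnPairs (m : ℕ) : Finset ((Fin m → ℕ) × ℕ) :=
  {p ∈ Fintype.piFinset (fun _ => range 2) ×ˢ range (m + 2) | ∑ j, p.1 j + p.2 ≤ m + 1}

theorem ptn_succ_eq_image_snoc (m : ℕ) :
    Ptn (m + 1) = ↑((ptnPairs m).image fun p => (Fin.snoc p.1 p.2 : Fin (m + 1) → ℕ)) := by
  ext a
  obtain ⟨b, c, rfl⟩ : ∃ b c, a = Fin.snoc b c := ⟨_, _, (Fin.snoc_init_self a).symm⟩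
  simp only [Ptn, ptnPairs, Set.mem_ofPred_eq, coe_image, Set.mem_image, mem_coe, mem_filter,
    mem_product, Fintype.mem_piFinset, mem_range, Fin.snoc_injective2.eq_iff, Prod.exists,
    exists_eq_right_right, exists_eq_right, Fin.sum_snoc, Fin.forall_fin_succ', Fin.snoc_castSucc,
    Fin.val_castSucc, Fin.val_last, Fin.is_lt, Nat.add_sub_cancel, lt_irrefl, false_imp_iff,
    forall_const, and_true, Nat.lt_succ_iff]
  exact ⟨fun ⟨hb, hc⟩ => ⟨⟨hb, by omega⟩, hc⟩, fun ⟨⟨hb, _⟩, hc⟩ => ⟨hb, hc⟩⟩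

theorem card_filter_snoc_ne_zero {m : ℕ} {b : Fin m → ℕ} (hb : ∀ j, b j ≤ 1) (c : ℕ) :
    #{i | (Fin.snoc b c : Fin (m + 1) → ℕ) i ≠ 0} = ∑ j, b j + if c = 0 then 0 else 1 := by
  rw [card_filter, Fin.sum_univ_castSucc]
  simp only [Fin.snoc_castSucc, Fin.snoc_last, ne_eq, ite_not]
  congr 1
  exact sum_congr rfl fun j _ => by have := hb j; split <;> omega

theorem one_sub_mul_sum_snoc (x y : R) {m : ℕ} {b : Fin m → ℕ}
    (hb : ∀ j, b j ≤ 1) :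
    (1 - y) * ∑ c ∈ range (m + 2), (if ∑ j, b j + c ≤ m + 1 then
        x ^ #{i | (Fin.snoc b c : Fin (m + 1) → ℕ) i ≠ 0} * y ^ ∑ i, (Fin.snoc b c : Fin (m + 1) → ℕ) i
        else 0) =
      (1 - y + x * y) * (x * y) ^ ∑ j, b j - x * y ^ (m + 2) * x ^ ∑ j, b j := by
  have hk : ∑ j, b j ≤ m := (sum_le_sum fun j _ => hb j).trans_eq (by simp)
  have hrange : {c ∈ range (m + 2) | ∑ j, b j + c ≤ m + 1} = range (m + 1 - ∑ j, b j + 1) := by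
    ext c; simp only [mem_filter, mem_range]; omega
  rw [← sum_filter, hrange, show m + 2 = ∑ j, b j + (m + 1 - ∑ j, b j + 1) by omega]
  simp_rw [card_filter_snoc_ne_zero hb, Fin.sum_snoc, pow_add, mul_mul_mul_comm, ← mul_pow]
  rw [← mul_sum, mul_left_comm, one_sub_mul_sum_range_pow_ite]
  ring

theorem one_sub_mul_finsum_ptn_succ (x y : R) (m : ℕ) :
    (1 - y) * ∑ᶠ a ∈ Ptn (m + 1), x ^ #{i | a i ≠ 0} * y ^ ∑ i, a i =
      (1 - y + x * y) * (1 + x * y) ^ m - x * y ^ (m + 2) * (1 + x) ^ m := by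
  rw [ptn_succ_eq_image_snoc, finsum_mem_coe_finset,
    sum_image fun p _ q _ h => Prod.ext_iff.2 (Fin.snoc_injective2 h), ptnPairs, sum_filter,
    sum_product, mul_sum]
  refine (sum_congr rfl fun b hb => one_sub_mul_sum_snoc x y fun j => ?_).trans ?_
  · simpa using Fintype.mem_piFinset.1 hb j
  rw [sum_sub_distrib, ← mul_sum, ← mul_sum, sum_piFinset_range_two_pow_sum,
    sum_piFinset_range_two_pow_sum]

end

/-- For every `n ≥ 1`, in `ℤ[X,Y]`:
`(1 - Y) K_{t_n}(X,Y) = (1-Y)(1+XY)^n + XY²(1+XY)^{n-1} - XY²(Y(1+X))^{n-1}`. -/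
theorem stmt4 (n : ℕ) (hn : 1 ≤ n) :
    (1 - Yv) * Kpoly n =
      (1 - Yv) * (1 + Xv * Yv) ^ n +
        Xv * Yv ^ 2 * (1 + Xv * Yv) ^ (n - 1) -
        Xv * Yv ^ 2 * (Yv * (1 + Xv)) ^ (n - 1) := by
  obtain ⟨m, rfl⟩ := Nat.exists_eq_add_of_le' hn
  rw [Kpoly, one_sub_mul_finsum_ptn_succ, Nat.add_sub_cancel, mul_pow]
  ring
end

section
/- For every integer n ≥ 1, the M-triangle M_{t_n}(X,Y) = ∑_{a ≤ b in P_{t_n}} μ(a,b) X^{ht(a)} Y^{ht(b)} satisfies, in the polynomial ring ℤ[X,Y], the identity (1 - XY) · M_{t_n}(X,Y) = (1 - XY)(1 + XY - Y)^n + (X^2 Y^2 - X Y^2)·((1 + XY - Y)^{n-1} - (2XY - Y)^{n-1}). -/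
open MvPolynomial Finset Fintype

/-- one-dimensional Möbius weight on the chain ℕ -/
def f1 (d : ℕ) : ℤ := if d = 0 then 1 else if d = 1 then -1 else 0

lemma sum_f1_range : ∀ k, ∑ i ∈ Finset.range (k+2), f1 i = 0 := by
  intro k
  induction k with
  | zero => decide
  | succ k ih =>
      rw [Finset.sum_range_succ, ih]
      simp [f1]

lemma sum_f1_Icc (u v : ℕ) (h : u ≤ v) :
    ∑ x ∈ Finset.Icc u v, f1 (x - u) = if u = v then 1 else 0 := by
  have : ∑ x ∈ Finset.Icc u v, f1 (x - u) = ∑ i ∈ Finset.range (v + 1 - u), f1 i := by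
    rw [← Finset.Ico_add_one_right_eq_Icc, Finset.sum_Ico_eq_sum_range]
    exact Finset.sum_congr rfl fun i _ => by rw [Nat.add_sub_cancel_left]
  rw [this]
  rcases Nat.lt_or_ge (v + 1 - u) 2 with hk | hk
  · have h1 : v + 1 - u = 1 := by omega
    have h2 : u = v := by omega
    rw [h1, h2]; simp [f1]
  · obtain ⟨k, hk2⟩ : ∃ k, v + 1 - u = k + 2 := ⟨v + 1 - u - 2, by omega⟩
    rw [hk2, sum_f1_range]
    have : u ≠ v := by omega
    simp [this]

/-- Möbius function of the product of chains -/
def muE {n : ℕ} (a b : Fin n → ℕ) : ℤ := ∏ i, f1 (b i - a i)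

lemma muE_box {n : ℕ} (a b : Fin n → ℕ) (hab : a ≤ b) :
    ∑ e ∈ Finset.Icc a b, muE a e = if a = b then 1 else 0 := by
  rw [Pi.Icc_eq]
  unfold muE
  rw [← Finset.prod_univ_sum (fun i => Finset.Icc (a i) (b i)) (fun i x => f1 (x - a i))]
  have : ∀ i, ∑ x ∈ Finset.Icc (a i) (b i), f1 (x - a i) = if a i = b i then 1 else 0 :=
    fun i => sum_f1_Icc _ _ (hab i)
  simp_rw [this]
  by_cases h : a = b
  · simp [h]
  · have : ∃ i, a i ≠ b i := by
      by_contra hc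
      push_neg at hc
      exact h (funext hc)
    obtain ⟨i, hi⟩ := this
    rw [if_neg h]
    exact Finset.prod_eq_zero (Finset.mem_univ i) (by simp [hi])


lemma Ptn_dc {n : ℕ} {a b : Fin n → ℕ} (hb : b ∈ Ptn n) (hab : a ≤ b) : a ∈ Ptn n := by
  obtain ⟨h1, h2⟩ := hb
  exact ⟨fun i hi => le_trans (hab i) (h1 i hi),
    le_trans (Finset.sum_le_sum fun i _ => hab i) h2⟩

lemma mu_eq_muE {n : ℕ} (mu : (Fin n → ℕ) → (Fin n → ℕ) → ℤ)
    (hrefl : ∀ a ∈ Ptn n, mu a a = 1)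
    (hrec : ∀ a ∈ Ptn n, ∀ b ∈ Ptn n, a < b →
      mu a b = -∑ᶠ e ∈ {e | e ∈ Ptn n ∧ a ≤ e ∧ e < b}, mu a e) :
    ∀ a ∈ Ptn n, ∀ b ∈ Ptn n, a ≤ b → mu a b = muE a b := by
  intro a ha
  have key : ∀ k (b : Fin n → ℕ), b ∈ Ptn n → a ≤ b → (∑ i, (b i - a i)) < k →
      mu a b = muE a b := by
    intro k
    induction k with
    | zero => intro b _ _ h; omega
    | succ k ih =>
        intro b hb hab hk
        rcases eq_or_lt_of_le hab with heq | hlt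
        · subst heq
          rw [hrefl a ha]
          unfold muE
          simp [f1]
        · rw [hrec a ha b hb hlt]
          have hset : {e | e ∈ Ptn n ∧ a ≤ e ∧ e < b} = ↑((Finset.Icc a b).erase b) := by
            ext e
            simp only [Set.mem_setOf_eq, Finset.coe_erase, Set.mem_diff,
              Finset.coe_Icc, Set.mem_Icc, Set.mem_singleton_iff]
            constructor
            · rintro ⟨_, h1, h2⟩
              exact ⟨⟨h1, le_of_lt h2⟩, ne_of_lt h2⟩
            · rintro ⟨⟨h1, h2⟩, h3⟩
              exact ⟨Ptn_dc hb h2, h1, lt_of_le_of_ne h2 h3⟩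
          rw [hset, finsum_mem_coe_finset]
          have hterm : ∀ e ∈ (Finset.Icc a b).erase b, mu a e = muE a e := by
            intro e he
            rw [Finset.mem_erase, Finset.mem_Icc] at he
            obtain ⟨hne, hae, heb⟩ := he
            refine ih e (Ptn_dc hb heb) hae ?_
            have hlt2 : ∑ i, (e i - a i) < ∑ i, (b i - a i) := by
              obtain ⟨j, hj⟩ : ∃ j, e j ≠ b j := Function.ne_iff.mp hne
              refine Finset.sum_lt_sum (fun i _ => Nat.sub_le_sub_right (heb i) _)
                ⟨j, Finset.mem_univ j, ?_⟩
              exact Nat.sub_lt_sub_right (hae j) (lt_of_le_of_ne (heb j) hj)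
            omega
          rw [Finset.sum_congr rfl hterm]
          have hbox := muE_box a b hab
          rw [← Finset.add_sum_erase _ _ (Finset.mem_Icc.mpr ⟨hab, le_refl b⟩),
            if_neg (ne_of_lt hlt)] at hbox
          linarith
  exact fun b hb hab => key (∑ i, (b i - a i) + 1) b hb hab (Nat.lt_succ_self _)


def Pfin (n : ℕ) : Finset (Fin n → ℕ) :=
  (Finset.Icc (0 : Fin n → ℕ) (fun _ => n)).filter
    (fun a => (∀ i : Fin n, (i : ℕ) < n - 1 → a i ≤ 1) ∧ ∑ i, a i ≤ n)

lemma mem_Pfin {n : ℕ} (a : Fin n → ℕ) : a ∈ Pfin n ↔ a ∈ Ptn n := by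
  unfold Pfin Ptn
  rw [Finset.mem_filter, Finset.mem_Icc]
  constructor
  · rintro ⟨_, h⟩; exact h
  · rintro ⟨h1, h2⟩
    refine ⟨⟨fun i => Nat.zero_le _, fun i => ?_⟩, h1, h2⟩
    calc a i ≤ ∑ j, a j := Finset.single_le_sum (fun j _ => Nat.zero_le _) (Finset.mem_univ i)
    _ ≤ n := h2

lemma Ptn_coe (n : ℕ) : Ptn n = ↑(Pfin n) := by
  ext a; rw [Finset.mem_coe, mem_Pfin]

/-- closed form inner polynomial -/
noncomputable def gi (m : ℕ) : MvPolynomial (Fin 2) ℤ :=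
  if m = 0 then 1 else Xv ^ m - Xv ^ (m - 1)

lemma gi_sum (m : ℕ) :
    ∑ x ∈ Finset.Icc 0 m, MvPolynomial.C (f1 (m - x)) * Xv ^ x = gi m := by
  rw [← Finset.Ico_add_one_right_eq_Icc, Nat.Ico_zero_eq_range]
  cases m with
  | zero => simp [gi, f1]
  | succ m =>
      rw [Finset.sum_range_succ, Finset.sum_range_succ]
      have h0 : ∑ x ∈ Finset.range m, MvPolynomial.C (f1 (m + 1 - x)) * Xv ^ x = 0 := by
        refine Finset.sum_eq_zero fun x hx => ?_
        rw [Finset.mem_range] at hx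
        have : f1 (m + 1 - x) = 0 := by unfold f1; split <;> [omega; (split <;> [omega; rfl])]
        rw [this]; simp
      rw [h0]
      simp only [Nat.add_sub_cancel_left, Nat.sub_self]
      simp only [gi, f1]
      norm_num
      ring

noncomputable def Hp (k : ℕ) : MvPolynomial (Fin 2) ℤ := ∑ l ∈ Finset.range k, Yv ^ l * gi l

lemma Hp_mul (k : ℕ) :
    (1 - Xv * Yv) * Hp (k + 1) = (1 - Yv) + Yv * (1 - Xv) * (Xv * Yv) ^ k := by
  induction k with
  | zero => simp [Hp, gi]; ring
  | succ k ih =>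
      have : Hp (k + 2) = Hp (k + 1) + Yv ^ (k + 1) * gi (k + 1) := Finset.sum_range_succ _ _
      rw [this, mul_add, ih]
      have : gi (k + 1) = Xv ^ (k + 1) - Xv ^ k := by simp [gi]
      rw [this]
      ring

/-- factorization of the inner sum over `a ≤ b` -/
lemma innerSumFac (n : ℕ) (b : Fin n → ℕ) :
    ∑ a ∈ Finset.Icc 0 b, MvPolynomial.C (muE a b) * (Xv ^ (∑ i, a i) * Yv ^ (∑ i, b i)) =
      Yv ^ (∑ i, b i) * ∏ i, gi (b i) := by
  have h1 : ∀ a : Fin n → ℕ, MvPolynomial.C (muE a b) * (Xv ^ (∑ i, a i) * Yv ^ (∑ i, b i)) =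
      Yv ^ (∑ i, b i) * ∏ i, (MvPolynomial.C (f1 (b i - a i)) * Xv ^ (a i)) := by
    intro a
    rw [Finset.prod_mul_distrib, ← map_prod, Finset.prod_pow_eq_pow_sum]
    unfold muE
    ring
  simp_rw [h1, ← Finset.mul_sum]
  congr 1
  rw [Pi.Icc_eq,
    ← Finset.prod_univ_sum (fun i => Finset.Icc ((0 : Fin n → ℕ) i) (b i))
      (fun i x => MvPolynomial.C (f1 (b i - x)) * Xv ^ x)]
  exact Finset.prod_congr rfl fun i _ => gi_sum (b i)

lemma snoc_sum {m : ℕ} (η : Fin m → ℕ) (l : ℕ) :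
    ∑ i, Fin.snoc η l i = (∑ i, η i) + l := by
  rw [Fin.sum_univ_castSucc]
  simp [Fin.snoc_castSucc, Fin.snoc_last]

lemma snoc_prod_gi {m : ℕ} (η : Fin m → ℕ) (l : ℕ) :
    ∏ i, gi ((Fin.snoc η l : Fin (m + 1) → ℕ) i) = (∏ i, gi (η i)) * gi l := by
  rw [Fin.prod_univ_castSucc]
  simp [Fin.snoc_castSucc, Fin.snoc_last]

lemma sum_Pfin_snoc (m : ℕ) (F : (Fin (m + 1) → ℕ) → MvPolynomial (Fin 2) ℤ) :
    ∑ b ∈ Pfin (m + 1), F b =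
      ∑ η ∈ Finset.Icc (0 : Fin m → ℕ) 1,
        ∑ l ∈ Finset.range (m + 2 - ∑ i, η i), F (Fin.snoc η l) := by
  rw [Finset.sum_sigma' (Finset.Icc (0 : Fin m → ℕ) 1)
    (fun η => Finset.range (m + 2 - ∑ i, η i)) (fun η l => F (Fin.snoc η l))]
  refine Finset.sum_bij' (fun b _ => ⟨Fin.init b, b (Fin.last m)⟩)
    (fun p _ => Fin.snoc p.1 p.2) ?_ ?_ ?_ ?_ ?_
  · intro b hb
    rw [mem_Pfin] at hb
    obtain ⟨h1, h2⟩ := hb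
    rw [Fin.sum_univ_castSucc] at h2
    refine Finset.mem_sigma.mpr ⟨Finset.mem_Icc.mpr ⟨fun i => Nat.zero_le _, fun i => ?_⟩, ?_⟩
    · exact h1 (Fin.castSucc i) (by simp)
    · rw [Finset.mem_range]
      dsimp only
      have hinit : ∑ i : Fin m, Fin.init b i = ∑ i : Fin m, b (Fin.castSucc i) :=
        Finset.sum_congr rfl fun i _ => rfl
      omega
  · rintro ⟨η, l⟩ hp
    dsimp only
    rw [Finset.mem_sigma, Finset.mem_Icc, Finset.mem_range] at hp
    obtain ⟨⟨_, hη⟩, hl⟩ := hp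
    dsimp only at hη hl
    have ht : ∑ i, η i ≤ m := by
      calc ∑ i, η i ≤ ∑ i : Fin m, 1 := Finset.sum_le_sum fun i _ => hη i
      _ = m := by simp
    rw [mem_Pfin]
    constructor
    · intro i hi
      have hi' : (i : ℕ) < m := by omega
      have : i = Fin.castSucc ⟨(i : ℕ), hi'⟩ := by ext; simp
      rw [this, Fin.snoc_castSucc]
      exact hη _
    · rw [snoc_sum]
      omega
  · intro b _
    exact Fin.snoc_init_self b
  · rintro ⟨η, l⟩ _
    dsimp only
    rw [Fin.init_snoc, Fin.snoc_last]
  · intro b _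
    dsimp only
    rw [Fin.snoc_init_self]

lemma box_sum (m : ℕ) (w : ℕ → MvPolynomial (Fin 2) ℤ) :
    ∑ η ∈ Finset.Icc (0 : Fin m → ℕ) 1, ∏ i, w (η i) = (w 0 + w 1) ^ m := by
  rw [Pi.Icc_eq, ← Finset.prod_univ_sum
    (fun i => Finset.Icc ((0 : Fin m → ℕ) i) ((1 : Fin m → ℕ) i)) (fun _ x => w x)]
  have h : ∀ i : Fin m, ∑ x ∈ Finset.Icc ((0 : Fin m → ℕ) i) ((1 : Fin m → ℕ) i), w x
      = w 0 + w 1 := by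
    intro i
    show ∑ x ∈ Finset.Icc 0 1, w x = w 0 + w 1
    have : (Finset.Icc (0 : ℕ) 1) = {0, 1} := by decide
    rw [this, Finset.sum_pair (by norm_num)]
  rw [Finset.prod_congr rfl fun i _ => h i, Finset.prod_const, Finset.card_univ,
    Fintype.card_fin]


/-- For every `n ≥ 1`, if `mu` is the Möbius function of the finite poset `P_{t_n}`
(i.e. `mu a a = 1` and `mu a b = -∑_{a ≤ e < b} mu a e` for `a < b` in `P_{t_n}`),
then the M-triangle `M_{t_n}(X,Y) = ∑_{a ≤ b} mu(a,b) X^{ht(a)} Y^{ht(b)}` satisfies,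
in `ℤ[X,Y]`:
`(1 - XY) M_{t_n}(X,Y) = (1-XY)(1+XY-Y)^n + (X²Y² - XY²)((1+XY-Y)^{n-1} - (2XY-Y)^{n-1})`. -/
theorem stmt5 (n : ℕ) (hn : 1 ≤ n)
    (mu : (Fin n → ℕ) → (Fin n → ℕ) → ℤ)
    (hrefl : ∀ a ∈ Ptn n, mu a a = 1)
    (hrec : ∀ a ∈ Ptn n, ∀ b ∈ Ptn n, a < b →
      mu a b = -∑ᶠ e ∈ {e | e ∈ Ptn n ∧ a ≤ e ∧ e < b}, mu a e) :
    (1 - Xv * Yv) *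
      (∑ᶠ a ∈ Ptn n, ∑ᶠ b ∈ {b | b ∈ Ptn n ∧ a ≤ b},
        MvPolynomial.C (mu a b) * (Xv ^ (∑ i, a i) * Yv ^ (∑ i, b i))) =
      (1 - Xv * Yv) * (1 + Xv * Yv - Yv) ^ n +
        (Xv ^ 2 * Yv ^ 2 - Xv * Yv ^ 2) *
          ((1 + Xv * Yv - Yv) ^ (n - 1) - (2 * Xv * Yv - Yv) ^ (n - 1)) := by
  classical
  obtain ⟨m, rfl⟩ : ∃ m, n = m + 1 := ⟨n - 1, by omega⟩
  have hmu := mu_eq_muE mu hrefl hrec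
  -- Step 1: reduce the double finsum to a single Finset sum over b
  have step1 : (∑ᶠ a ∈ Ptn (m + 1), ∑ᶠ b ∈ {b | b ∈ Ptn (m + 1) ∧ a ≤ b},
        MvPolynomial.C (mu a b) * (Xv ^ (∑ i, a i) * Yv ^ (∑ i, b i))) =
      ∑ b ∈ Pfin (m + 1), Yv ^ (∑ i, b i) * ∏ i, gi (b i) := by
    have hinner : ∀ a : Fin (m + 1) → ℕ,
        {b | b ∈ (↑(Pfin (m + 1)) : Set (Fin (m + 1) → ℕ)) ∧ a ≤ b}
          = ↑((Pfin (m + 1)).filter (fun b => a ≤ b)) := by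
      intro a
      ext b
      simp only [Set.mem_setOf_eq, Finset.coe_filter, Finset.mem_coe]
    calc (∑ᶠ a ∈ Ptn (m + 1), ∑ᶠ b ∈ {b | b ∈ Ptn (m + 1) ∧ a ≤ b},
        MvPolynomial.C (mu a b) * (Xv ^ (∑ i, a i) * Yv ^ (∑ i, b i)))
        = ∑ a ∈ Pfin (m + 1), ∑ b ∈ (Pfin (m + 1)).filter (fun b => a ≤ b),
            MvPolynomial.C (mu a b) * (Xv ^ (∑ i, a i) * Yv ^ (∑ i, b i)) := by
          rw [Ptn_coe, finsum_mem_coe_finset]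
          exact Finset.sum_congr rfl fun a ha => by rw [hinner a, finsum_mem_coe_finset]
      _ = ∑ a ∈ Pfin (m + 1), ∑ b ∈ (Pfin (m + 1)).filter (fun b => a ≤ b),
            MvPolynomial.C (muE a b) * (Xv ^ (∑ i, a i) * Yv ^ (∑ i, b i)) := by
          refine Finset.sum_congr rfl fun a ha => Finset.sum_congr rfl fun b hb => ?_
          rw [Finset.mem_filter] at hb
          rw [hmu a ((mem_Pfin a).mp ha) b ((mem_Pfin b).mp hb.1) hb.2]
      _ = ∑ b ∈ Pfin (m + 1), ∑ a ∈ Finset.Icc 0 b,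
            MvPolynomial.C (muE a b) * (Xv ^ (∑ i, a i) * Yv ^ (∑ i, b i)) := by
          refine Finset.sum_comm' fun a b => ?_
          simp only [Finset.mem_filter, Finset.mem_Icc, mem_Pfin]
          constructor
          · rintro ⟨ha, hb, hab⟩; exact ⟨⟨fun i => Nat.zero_le _, hab⟩, hb⟩
          · rintro ⟨⟨_, hab⟩, hb⟩; exact ⟨Ptn_dc hb hab, hb, hab⟩
      _ = ∑ b ∈ Pfin (m + 1), Yv ^ (∑ i, b i) * ∏ i, gi (b i) :=
          Finset.sum_congr rfl fun b _ => innerSumFac (m + 1) b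
  rw [step1, sum_Pfin_snoc m (fun b => Yv ^ (∑ i, b i) * ∏ i, gi (b i))]
  -- Step 2: per-η inner sum is a geometric-like series
  have step2 : ∀ η ∈ Finset.Icc (0 : Fin m → ℕ) 1,
      ∑ l ∈ Finset.range (m + 2 - ∑ i, η i),
        (fun b => Yv ^ (∑ i, b i) * ∏ i, gi (b i)) (Fin.snoc η l) =
      (Yv ^ (∑ i, η i) * ∏ i, gi (η i)) * Hp (m + 2 - ∑ i, η i) := by
    intro η _
    rw [Hp, Finset.mul_sum]
    refine Finset.sum_congr rfl fun l _ => ?_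
    dsimp only
    rw [snoc_sum, snoc_prod_gi, pow_add]
    ring
  rw [Finset.sum_congr rfl step2, Finset.mul_sum]
  -- Step 3: per-η expansion after multiplying by (1 - XY)
  have step3 : ∀ η ∈ Finset.Icc (0 : Fin m → ℕ) 1,
      (1 - Xv * Yv) * ((Yv ^ (∑ i, η i) * ∏ i, gi (η i)) * Hp (m + 2 - ∑ i, η i)) =
      (1 - Yv) * ∏ i, (Yv ^ (η i) * gi (η i)) +
        (Yv * (1 - Xv) * (Xv * Yv)) *
          ∏ i, ((Xv * Yv) ^ (1 - η i) * (Yv ^ (η i) * gi (η i))) := by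
    intro η hη
    rw [Finset.mem_Icc] at hη
    have hη1 : ∀ i, η i ≤ 1 := hη.2
    have ht : ∑ i, η i ≤ m := by
      calc ∑ i, η i ≤ ∑ i : Fin m, 1 := Finset.sum_le_sum fun i _ => hη1 i
      _ = m := by simp
    have hk : m + 2 - ∑ i, η i = (m - ∑ i, η i + 1) + 1 := by omega
    rw [hk, mul_left_comm, Hp_mul]
    have h1 : Yv ^ (∑ i, η i) = ∏ i, Yv ^ (η i) :=
      (Finset.prod_pow_eq_pow_sum _ _ _).symm
    have hsum : ∑ i, (1 - η i) = m - ∑ i, η i := by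
      have h2 : ∑ i, ((1 - η i) + η i) = ∑ i : Fin m, 1 :=
        Finset.sum_congr rfl fun i _ => by have := hη1 i; omega
      rw [Finset.sum_add_distrib] at h2
      simp only [Finset.sum_const, Finset.card_univ, Fintype.card_fin, smul_eq_mul,
        mul_one] at h2
      omega
    have h2 : (Xv * Yv) ^ (m - ∑ i, η i) = ∏ i, (Xv * Yv) ^ (1 - η i) := by
      rw [Finset.prod_pow_eq_pow_sum, hsum]
    have h3 : ∏ i, (Yv ^ (η i) * gi (η i)) = (∏ i, Yv ^ (η i)) * ∏ i, gi (η i) :=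
      Finset.prod_mul_distrib
    have h4 : ∏ i, ((Xv * Yv) ^ (1 - η i) * (Yv ^ (η i) * gi (η i))) =
        (∏ i, (Xv * Yv) ^ (1 - η i)) * ((∏ i, Yv ^ (η i)) * ∏ i, gi (η i)) := by
      rw [Finset.prod_mul_distrib, Finset.prod_mul_distrib]
    rw [h3, h4, ← h1, ← h2, pow_succ]
    ring
  rw [Finset.sum_congr rfl step3, Finset.sum_add_distrib, ← Finset.mul_sum, ← Finset.mul_sum,
    box_sum m (fun x => Yv ^ x * gi x), box_sum m (fun x => (Xv * Yv) ^ (1 - x) * (Yv ^ x * gi x))]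
  have ggi0 : gi 0 = 1 := by simp [gi]
  have ggi1 : gi 1 = Xv - 1 := by simp [gi]
  rw [ggi0, ggi1]
  simp only [Nat.add_sub_cancel, pow_zero, pow_one, one_mul, mul_one, Nat.sub_self,
    Nat.sub_zero]
  rw [show (1 : MvPolynomial (Fin 2) ℤ) + Yv * (Xv - 1) = 1 + Xv * Yv - Yv by ring,
    show Xv * Yv + Yv * (Xv - 1) = 2 * Xv * Yv - Yv by ring, pow_succ]
  ring
end

section
/- For all integers n ≥ 1 and m ≥ 0, twice the number of lattice points x ∈ ℕ^n with x_i ≤ m for 1 ≤ i ≤ n-1 and x_1 + ⋯ + x_n ≤ mn equals (m+1)^{n-1} · (mn + m + 2). Equivalently, the Ehrhart count E_{t_n}(m) of the dilate m·Q_{t_n} satisfies E_{t_n}(m) = (m+1)^{n-1}·(mn/2 + m/2 + 1). -/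
open Finset

/-- The Ehrhart count `E_{t_n}(m)`: the number of lattice points of the dilate
`m·Q_{t_n}`, i.e. the number of `x ∈ ℕ^n` with `x i ≤ m` for the first `n - 1`
coordinates and `x 1 + ⋯ + x n ≤ m·n`. -/
noncomputable def Ecount (n m : ℕ) : ℕ :=
  Nat.card {x : Fin n → ℕ // (∀ i : Fin n, (i : ℕ) < n - 1 → x i ≤ m) ∧ ∑ i, x i ≤ m * n}

def arborEquiv (k m : ℕ) :
    {x : Fin (k+1) → ℕ // (∀ i : Fin (k+1), (i : ℕ) < (k+1) - 1 → x i ≤ m) ∧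
        ∑ i, x i ≤ m * (k+1)}
      ≃ Σ y : Fin k → Fin (m+1), Fin (m*(k+1)+1 - ∑ i, (y i : ℕ)) where
  toFun x := ⟨fun i => ⟨x.1 i.castSucc, by
      have := x.2.1 i.castSucc (by simp)
      omega⟩, ⟨x.1 (Fin.last k), by
      have hsum := x.2.2
      rw [Fin.sum_univ_castSucc] at hsum
      show x.1 (Fin.last k) < m*(k+1)+1 - ∑ i : Fin k, x.1 i.castSucc
      omega⟩⟩
  invFun p := ⟨Fin.snoc (fun i => (p.1 i : ℕ)) (p.2 : ℕ), by
      constructor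
      · intro i hi
        have hik : (i : ℕ) < k := by simpa using hi
        have : i = Fin.castSucc ⟨(i : ℕ), hik⟩ := by ext; simp
        rw [this, Fin.snoc_castSucc]
        exact Fin.is_le _
      · rw [Fin.sum_univ_castSucc]
        simp only [Fin.snoc_castSucc, Fin.snoc_last]
        have := p.2.isLt
        omega⟩
  left_inv x := by
    apply Subtype.ext
    funext i
    induction i using Fin.lastCases with
    | last => simp
    | cast i => simp
  right_inv p := by
    obtain ⟨y, j⟩ := p
    refine Sigma.ext ?_ ?_
    · funext i; ext; simp
    · rw [Fin.heq_ext_iff]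
      · simp
      · congr 1
        congr 1
        funext i; simp

/-- For all integers `n ≥ 1` and `m ≥ 0`, twice the number of lattice points of
`m·Q_{t_n}` equals `(m+1)^{n-1} (mn + m + 2)`; equivalently
`E_{t_n}(m) = (m+1)^{n-1} (mn/2 + m/2 + 1)`. -/
theorem stmt7 (n m : ℕ) (hn : 1 ≤ n) :
    2 * Ecount n m = (m + 1) ^ (n - 1) * (m * n + m + 2) := by
  obtain ⟨k, rfl⟩ : ∃ k, n = k + 1 := ⟨n - 1, by omega⟩
  have key : Ecount (k+1) m = ∑ y : Fin k → Fin (m+1), (m*(k+1)+1 - ∑ i, (y i : ℕ)) := by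
    rw [Ecount, Nat.card_congr (arborEquiv k m), Nat.card_eq_fintype_card,
      Fintype.card_sigma]
    simp
  have hs : ∀ y : Fin k → Fin (m+1), ∑ i, (y i : ℕ) ≤ k * m := by
    intro y
    calc ∑ i, (y i : ℕ) ≤ ∑ _i : Fin k, m := Finset.sum_le_sum fun i _ => Fin.is_le _
    _ = k * m := by simp [mul_comm]
  have hrev : ∀ y : Fin k → Fin (m+1),
      ∑ i, ((y i).rev : ℕ) = k * m - ∑ i, (y i : ℕ) := by
    intro y
    have h1 : ∑ i, (((y i).rev : ℕ) + (y i : ℕ)) = k * m := by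
      have : ∀ i : Fin k, ((y i).rev : ℕ) + (y i : ℕ) = m := by
        intro i
        have h2 := (y i).isLt
        have h3 : ((y i).rev : ℕ) = m + 1 - ((y i : ℕ) + 1) := Fin.val_rev _
        generalize hA : ((y i).rev : ℕ) = A at h3 ⊢
        generalize hB : ((y i) : ℕ) = B at h2 h3 ⊢
        clear key hs
        omega
      have h4 : ∑ i, (((y i).rev : ℕ) + (y i : ℕ)) = ∑ _i : Fin k, m :=
        Finset.sum_congr rfl fun i _ => this i
      rw [h4]
      simp [mul_comm]
    rw [Finset.sum_add_distrib] at h1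
    generalize hA : ∑ i, ((y i).rev : ℕ) = A at h1 ⊢
    generalize hB : ∑ i, ((y i) : ℕ) = B at h1 ⊢
    clear key hs
    omega
  have double : 2 * ∑ y : Fin k → Fin (m+1), (m*(k+1)+1 - ∑ i, (y i : ℕ))
      = ∑ y : Fin k → Fin (m+1),
          ((m*(k+1)+1 - ∑ i, (y i : ℕ)) + (m*(k+1)+1 - ∑ i, ((y i).rev : ℕ))) := by
    rw [Finset.sum_add_distrib, two_mul]
    congr 1
    exact Fintype.sum_equiv (Equiv.piCongrRight fun _ => Fin.revPerm)
      (fun y => m*(k+1)+1 - ∑ i, (y i : ℕ))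
      (fun y => m*(k+1)+1 - ∑ i, ((y i).rev : ℕ)) (fun y => by simp)
  rw [key, double]
  have : ∀ y : Fin k → Fin (m+1),
      (m*(k+1)+1 - ∑ i, (y i : ℕ)) + (m*(k+1)+1 - ∑ i, ((y i).rev : ℕ))
        = m * k + 2 * m + 2 := by
    intro y
    have h1 := hs y
    have h2 := hrev y
    have h4 : m * (k+1) = k * m + m := by ring
    rw [show m * k = k * m from mul_comm m k]
    generalize hA : ∑ i, ((y i).rev : ℕ) = A at h2 ⊢
    generalize hB : ∑ i, ((y i) : ℕ) = B at h1 h2 ⊢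
    clear hs hrev key double
    generalize hK : k * m = K at h1 h2 h4 ⊢
    generalize hM : m * (k+1) = M at h4 ⊢
    omega
  have hconst : ∑ y : Fin k → Fin (m+1),
      ((m*(k+1)+1 - ∑ i, (y i : ℕ)) + (m*(k+1)+1 - ∑ i, ((y i).rev : ℕ)))
      = ∑ _y : Fin k → Fin (m+1), (m * k + 2 * m + 2) :=
    Finset.sum_congr rfl fun y _ => this y
  rw [hconst, Finset.sum_const, Finset.card_univ]
  simp only [Fintype.card_pi, Fintype.card_fin, Finset.prod_const, Finset.card_univ,
    smul_eq_mul]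
  simp only [Nat.add_sub_cancel]
  ring
end

section
/- For all integers n ≥ 1 and m ≥ 0, the number of lattice points x ∈ ℕ^n with x_i ≤ m for 1 ≤ i ≤ n-1 and x_1 + ⋯ + x_n ≤ mn equals ∑_{j=0}^{n-1} (-1)^j · C(n-1, j) · C((n-j)(m+1), n). -/
open Finset

namespace Finset

theorem card_filter_forall_not_eq_sum_powerset {α ι : Type*} [DecidableEq ι]
    (A : Finset α) (I : Finset ι) (p : ι → α → Prop) [∀ i, DecidablePred (p i)] :
    (#{a ∈ A | ∀ i ∈ I, ¬ p i a} : ℤ) =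
      ∑ T ∈ I.powerset, (-1 : ℤ) ^ #T * #{a ∈ A | ∀ i ∈ T, p i a} := by
  have signed_count (a : α) :
      ∑ T ∈ I.powerset, (if ∀ i ∈ T, p i a then (-1 : ℤ) ^ #T else 0) =
        if ∀ i ∈ I, ¬ p i a then 1 else 0 := by
    have hT : {T ∈ I.powerset | ∀ i ∈ T, p i a} = {i ∈ I | p i a}.powerset := by
      ext T
      simp only [mem_filter, mem_powerset, subset_iff]
      grind
    rw [← sum_filter, hT, sum_powerset_neg_one_pow_card]
    exact if_congr filter_eq_empty_iff rfl rfl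
  simp_rw [card_filter, Nat.cast_sum, mul_sum, Nat.cast_ite, Nat.cast_one, Nat.cast_zero,
    mul_ite, mul_one, mul_zero]
  rw [sum_comm]
  exact sum_congr rfl fun a _ => (signed_count a).symm

variable {ι : Type*} [Fintype ι] [DecidableEq ι]

theorem card_piAntidiag_univ (N : ℕ) :
    #(piAntidiag (univ : Finset ι) N) = (Fintype.card ι + N - 1).choose N := by
  rw [← map_sym_eq_piAntidiag, card_map, sym_univ, card_univ, Sym.card_sym_eq_choose]

theorem filter_le_piAntidiag_univ {s : ι → ℕ} {N : ℕ} (h : ∑ i, s i ≤ N) :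
    {x ∈ piAntidiag (univ : Finset ι) N | ∀ i, s i ≤ x i} =
      (piAntidiag univ (N - ∑ i, s i)).map (addRightEmbedding s) := by
  ext x
  simp only [mem_filter, mem_piAntidiag, mem_map, addRightEmbedding_apply, mem_univ,
    implies_true, and_true, ← Pi.le_def]
  constructor
  · rintro ⟨rfl, hsx⟩
    refine ⟨x - s, ?_, tsub_add_cancel_of_le hsx⟩
    simp [sum_tsub_distrib _ fun i _ => hsx i]
  · rintro ⟨y, hy, rfl⟩
    refine ⟨?_, le_add_self⟩
    simp [sum_add_distrib, hy, h]

theorem filter_le_piAntidiag_univ_of_lt {s : ι → ℕ} {N : ℕ} (h : N < ∑ i, s i) :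
    {x ∈ piAntidiag (univ : Finset ι) N | ∀ i, s i ≤ x i} = ∅ := by
  refine filter_false_of_mem fun x hx hsx => h.not_ge ?_
  rw [← (mem_piAntidiag.1 hx).1]
  exact sum_le_sum fun i _ => hsx i

/-- If `N < #T * b`, the set is empty and `N + k - #T * b < k` makes the right side `0` too. -/
theorem card_filter_piAntidiag_univ_forall_le_apply {k : ℕ} (hι : Fintype.card ι = k + 1)
    (hk : 0 < k) (T : Finset ι) (b N : ℕ) :
    #{x ∈ piAntidiag (univ : Finset ι) N | ∀ i ∈ T, b ≤ x i} = (N + k - #T * b).choose k := by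
  set s : ι → ℕ := fun i => if i ∈ T then b else 0
  have hs : ∑ i, s i = #T * b := by simp [s, sum_ite_mem]
  have hle (x : ι → ℕ) : (∀ i ∈ T, b ≤ x i) ↔ ∀ i, s i ≤ x i := by
    simp only [s]
    grind
  simp_rw [hle]
  by_cases h : #T * b ≤ N
  · rw [filter_le_piAntidiag_univ (hs ▸ h), card_map, card_piAntidiag_univ, hs, hι,
      show N + k - #T * b = (N - #T * b) + k by omega, ← Nat.choose_symm_add]
    congr 1
    omega
  · rw [filter_le_piAntidiag_univ_of_lt (by omega), card_empty,
      Nat.choose_eq_zero_of_lt (by omega)]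

def cappedPiAntidiag (I : Finset ι) (b N : ℕ) : Finset (ι → ℕ) :=
  {x ∈ piAntidiag univ N | ∀ i ∈ I, x i ≤ b}

theorem card_cappedPiAntidiag {k : ℕ} (hι : Fintype.card ι = k + 1) (hk : 0 < k)
    (I : Finset ι) (b N : ℕ) :
    (#(cappedPiAntidiag I b N) : ℤ) =
      ∑ j ∈ range (#I + 1), (-1) ^ j * ((#I).choose j : ℤ) * (N + k - j * (b + 1)).choose k := by
  have h := card_filter_forall_not_eq_sum_powerset (piAntidiag (univ : Finset ι) N) I
    fun i x => b + 1 ≤ x i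
  simp only [not_le, Nat.lt_add_one_iff] at h
  rw [cappedPiAntidiag, h]
  calc _ = ∑ T ∈ I.powerset, (-1 : ℤ) ^ #T * ((N + k - #T * (b + 1)).choose k : ℤ) :=
        sum_congr rfl fun T _ => by
          congr 2
          -- the filters decide `∀ i ∈ T` through different instances (`Finset` vs `Fintype`)
          convert card_filter_piAntidiag_univ_forall_le_apply hι hk T (b + 1) N
    _ = _ := by
      rw [sum_powerset_apply_card fun j => (-1 : ℤ) ^ j * ((N + k - j * (b + 1)).choose k : ℤ)]
      exact sum_congr rfl fun j _ => by rw [nsmul_eq_mul]; ring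

end Finset

theorem natCard_sum_le_eq_card_filter_piAntidiag {n : ℕ} (P : (Fin n → ℕ) → Prop)
    [DecidablePred P] (N : ℕ) :
    Nat.card {x : Fin n → ℕ // P x ∧ ∑ i, x i ≤ N} =
      #{y ∈ piAntidiag (univ : Finset (Fin (n + 1))) N | P (Fin.init y)} := by
  rw [← Nat.card_eq_finsetCard]
  refine Nat.card_congr
    { toFun := fun x => ⟨Fin.snoc x.1 (N - ∑ i, x.1 i), ?_⟩
      invFun := fun y => ⟨Fin.init y.1, ?_⟩
      left_inv := fun x => Subtype.ext (by simp)
      right_inv := fun y => Subtype.ext ?_ }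
  · have hx := x.2.2
    simp only [mem_filter, mem_piAntidiag, Fin.sum_univ_castSucc, Fin.snoc_castSucc,
      Fin.snoc_last, ne_eq, mem_univ, implies_true, and_true, Fin.init_snoc, x.2.1]
    omega
  · have hy := mem_filter.1 y.2
    rw [mem_piAntidiag, Fin.sum_univ_castSucc] at hy
    exact ⟨hy.2, by simp only [Fin.init]; omega⟩
  · have hy := (mem_piAntidiag.1 (mem_filter.1 y.2).1).1
    rw [Fin.sum_univ_castSucc] at hy
    dsimp only
    have hlast : N - ∑ i, Fin.init y.1 i = y.1 (Fin.last n) := by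
      simp only [Fin.init]
      omega
    rw [hlast, Fin.snoc_init_self]

theorem ecount_eq_card_cappedPiAntidiag (n m : ℕ) :
    Ecount n m = #(cappedPiAntidiag {i : Fin (n + 1) | (i : ℕ) < n - 1} m (m * n)) := by
  rw [Ecount,
    natCard_sum_le_eq_card_filter_piAntidiag fun x => ∀ i : Fin n, (i : ℕ) < n - 1 → x i ≤ m]
  congr 1
  ext y
  have hlast : ¬ n < n - 1 := by omega
  rw [mem_filter]
  simp [cappedPiAntidiag, Fin.forall_fin_succ' (n := n), Fin.init, hlast]

/-- For all integers `n ≥ 1` and `m ≥ 0`, the number of lattice points of `m·Q_{t_n}`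
equals `∑_{j=0}^{n-1} (-1)^j C(n-1, j) C((n-j)(m+1), n)`. -/
theorem stmt8 (n m : ℕ) (hn : 1 ≤ n) :
    (Ecount n m : ℤ) =
      ∑ j ∈ Finset.range n,
        (-1 : ℤ) ^ j * Nat.choose (n - 1) j * Nat.choose ((n - j) * (m + 1)) n := by
  rw [ecount_eq_card_cappedPiAntidiag, card_cappedPiAntidiag (Fintype.card_fin _) hn,
    Fin.card_filter_val_lt, min_eq_right (by omega), Nat.sub_add_cancel hn]
  refine sum_congr rfl fun j _ => ?_
  rw [show m * n + n - j * (m + 1) = (n - j) * (m + 1) by rw [Nat.sub_mul]; ring_nf]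
end

section
/- Fix an integer m ≥ 0, and for each integer n ≥ 1 let E_n(m) denote the number of lattice points x ∈ ℕ^n with x_i ≤ m for 1 ≤ i ≤ n-1 and x_1 + ⋯ + x_n ≤ mn. Then in the ring of formal power series ℚ[[s]] one has the identity ((m+1)s - 1)^2 · (1 + ∑_{n ≥ 1} E_n(m) s^n) = 1 - (m+1)s + (m(m+1)/2)·s^2; equivalently, 1 + ∑_{n ≥ 1} E_n(m) s^n = (1/2)·(1 - s/((m+1)s - 1) - (s - 1)/((m+1)s - 1)^2). -/
private lemma snoc_mem (k m : ℕ)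
    (p : Σ y : Fin k → Fin (m + 1), Fin (m * (k + 1) - (∑ i, (y i : ℕ)) + 1)) :
    (∀ i : Fin (k+1), (i : ℕ) < (k+1) - 1 →
        (Fin.snoc (fun i => ((p.1 i : ℕ))) (p.2 : ℕ) : Fin (k+1) → ℕ) i ≤ m) ∧
      ∑ i, (Fin.snoc (fun i => ((p.1 i : ℕ))) ((p.2 : ℕ)) : Fin (k+1) → ℕ) i ≤ m * (k + 1) := by
  obtain ⟨y, j⟩ := p
  constructor
  · intro i hi
    have hik : (i : ℕ) < k := by simpa using hi
    have : i = Fin.castSucc ⟨(i : ℕ), hik⟩ := by ext; rfl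
    rw [this, Fin.snoc_castSucc]
    exact Nat.lt_succ_iff.mp (y _).isLt
  · rw [Fin.sum_univ_castSucc]
    simp only [Fin.snoc_castSucc, Fin.snoc_last]
    have hb : (∑ i, ((y i : ℕ))) ≤ m * k := by
      calc (∑ i, ((y i : ℕ))) ≤ ∑ _i : Fin k, m :=
            Finset.sum_le_sum fun i _ => Nat.lt_succ_iff.mp (y i).isLt
        _ = m * k := by simp [Finset.sum_const, mul_comm]
    refine le_trans (Nat.add_le_add_left (Nat.lt_succ_iff.mp j.isLt) _) ?_
    have : m * (k + 1) = m * k + m := by ring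
    omega

noncomputable def snocMap (k m : ℕ)
    (p : Σ y : Fin k → Fin (m + 1), Fin (m * (k + 1) - (∑ i, (y i : ℕ)) + 1)) :
    {x : Fin (k+1) → ℕ // (∀ i : Fin (k+1), (i : ℕ) < (k+1) - 1 → x i ≤ m) ∧
      ∑ i, x i ≤ m * (k + 1)} :=
  ⟨Fin.snoc (fun i => ((p.1 i : ℕ))) (p.2 : ℕ), snoc_mem k m p⟩

lemma Ecount_succ (k m : ℕ) :
    Ecount (k + 1) m = ∑ y : Fin k → Fin (m + 1), (m * (k + 1) - (∑ i, (y i : ℕ)) + 1) := by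
  classical
  have key : Nat.card (Σ y : Fin k → Fin (m + 1), Fin (m * (k + 1) - (∑ i, (y i : ℕ)) + 1)) =
      Ecount (k + 1) m := by
    apply Nat.card_eq_of_bijective (snocMap k m)
    constructor
    · rintro ⟨y, j⟩ ⟨y', j'⟩ h
      simp only [snocMap, Subtype.mk.injEq] at h
      have hy : y = y' := by
        funext i
        have := congrFun h i.castSucc
        simp only [Fin.snoc_castSucc] at this
        exact Fin.ext this
      subst hy
      have := congrFun h (Fin.last k)
      simp only [Fin.snoc_last] at this
      exact Sigma.ext rfl (heq_of_eq (Fin.ext this))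
    · rintro ⟨x, hx1, hx2⟩
      have hsum : (∑ i : Fin k, x i.castSucc) + x (Fin.last k) ≤ m * (k + 1) := by
        rw [← Fin.sum_univ_castSucc]; exact hx2
      have hle : ∀ i : Fin k, x i.castSucc < m + 1 := by
        intro i
        have := hx1 i.castSucc (by simp [i.isLt])
        omega
      refine ⟨⟨fun i => ⟨x i.castSucc, hle i⟩, ⟨x (Fin.last k), ?_⟩⟩, ?_⟩
      · simp only
        omega
      · apply Subtype.ext
        simp only [snocMap]
        funext i
        refine Fin.lastCases ?_ ?_ i
        · simp
        · intro j; simp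
  rw [← key, Nat.card_eq_fintype_card, Fintype.card_sigma]
  simp

lemma gauss (m : ℕ) : ∑ a : Fin (m + 1), (a : ℚ) = m * (m + 1) / 2 := by
  rw [Fin.sum_univ_eq_sum_range]
  have h : (∑ i ∈ Finset.range (m + 1), i) * 2 = (m + 1) * m := by
    simpa using Finset.sum_range_id_mul_two (m + 1)
  have h2 : ((∑ i ∈ Finset.range (m + 1), i : ℕ) : ℚ) * 2 = ((m : ℚ) + 1) * m := by
    exact_mod_cast congrArg (Nat.cast : ℕ → ℚ) h
  push_cast at h2 ⊢
  linarith

lemma sum_val (m k : ℕ) :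
    ∑ y : Fin k → Fin (m + 1), ((∑ i, (y i : ℕ) : ℕ) : ℚ) =
      (k : ℚ) * m * (m + 1) ^ k / 2 := by
  induction k with
  | zero => simp
  | succ k ih =>
    rw [← Equiv.sum_comp (Fin.consEquiv (fun _ : Fin (k + 1) => Fin (m + 1)))
      (fun y => ((∑ i, (y i : ℕ) : ℕ) : ℚ)), Fintype.sum_prod_type]
    have hval : ∀ (a : Fin (m + 1)) (z : Fin k → Fin (m + 1)),
        ((∑ i, ((Fin.consEquiv (fun _ : Fin (k + 1) => Fin (m + 1))) (a, z) i : ℕ) : ℕ) : ℚ)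
          = (a : ℚ) + ((∑ i, (z i : ℕ) : ℕ) : ℚ) := by
      intro a z
      rw [Fin.sum_univ_succ]
      push_cast
      simp [Fin.consEquiv]
    simp only [hval]
    simp only [Finset.sum_add_distrib, Finset.sum_const, Finset.card_univ, nsmul_eq_mul,
      Fintype.card_fun, Fintype.card_fin, ih]
    rw [← Finset.mul_sum, gauss]
    push_cast
    ring

lemma Ecount_formula (m k : ℕ) :
    ((Ecount (k + 1) m : ℚ)) = ((m : ℚ) + 1) ^ k * ((m : ℚ) * (k + 2) + 2) / 2 := by
  have hle : ∀ y : Fin k → Fin (m + 1), (∑ i, (y i : ℕ)) ≤ m * (k + 1) := by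
    intro y
    calc (∑ i, (y i : ℕ)) ≤ ∑ _i : Fin k, m :=
          Finset.sum_le_sum fun i _ => Nat.lt_succ_iff.mp (y i).isLt
      _ = m * k := by simp [mul_comm]
      _ ≤ m * (k + 1) := Nat.mul_le_mul_left m (Nat.le_succ k)
  rw [Ecount_succ, Nat.cast_sum]
  have hterm : ∀ y : Fin k → Fin (m + 1),
      ((m * (k + 1) - (∑ i, (y i : ℕ)) + 1 : ℕ) : ℚ)
        = ((m : ℚ) * (k + 1) + 1) - ((∑ i, (y i : ℕ) : ℕ) : ℚ) := by
    intro y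
    rw [Nat.cast_add, Nat.cast_sub (hle y)]
    push_cast
    ring
  rw [Finset.sum_congr rfl fun y _ => hterm y, Finset.sum_sub_distrib, sum_val,
    Finset.sum_const, Finset.card_univ]
  simp only [Fintype.card_fun, Fintype.card_fin, nsmul_eq_mul]
  push_cast
  ring

/-- Fix `m ≥ 0`. In `ℚ[[s]]` one has
`((m+1)s - 1)² (1 + ∑_{n ≥ 1} E_n(m) sⁿ) = 1 - (m+1)s + (m(m+1)/2) s²`,
where `1 + ∑_{n ≥ 1} E_n(m) sⁿ` is the power series whose constant coefficient is `1`
and whose `n`-th coefficient is `E_n(m)` for `n ≥ 1`. (This is equivalent to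
`1 + ∑_{n ≥ 1} E_n(m) sⁿ = (1/2)(1 - s/((m+1)s-1) - (s-1)/((m+1)s-1)²)`.) -/
theorem stmt9 (m : ℕ) :
    (((m : PowerSeries ℚ) + 1) * PowerSeries.X - 1) ^ 2 *
      PowerSeries.mk (fun n => if n = 0 then 1 else (Ecount n m : ℚ)) =
    1 - ((m : PowerSeries ℚ) + 1) * PowerSeries.X +
      PowerSeries.C ((m * (m + 1) : ℚ) / 2) * PowerSeries.X ^ 2 := by
  set F := PowerSeries.mk (fun n => if n = 0 then 1 else (Ecount n m : ℚ)) with hF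
  obtain ⟨a, ha⟩ : ∃ a : ℚ, a = (m : ℚ) + 1 := ⟨_, rfl⟩
  have hc : (m : PowerSeries ℚ) + 1 = PowerSeries.C a := by
    rw [ha, map_add, map_one, map_natCast]
  have hd : PowerSeries.C ((m * (m + 1) : ℚ) / 2) = PowerSeries.C (a * (a - 1) / 2) := by
    rw [ha]; ring_nf
  rw [hc, hd]
  have expand : ((PowerSeries.C a) * PowerSeries.X - 1) ^ 2 * F =
      PowerSeries.C (a ^ 2) * (PowerSeries.X * (PowerSeries.X * F))
        - PowerSeries.C (2 * a) * (PowerSeries.X * F) + F := by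
    rw [map_pow, map_mul, map_ofNat]
    ring
  rw [expand]
  ext n
  rcases n with _ | _ | _ | n <;>
    simp only [map_add, map_sub, PowerSeries.coeff_C_mul, PowerSeries.coeff_zero_X_mul,
      PowerSeries.coeff_succ_X_mul, PowerSeries.coeff_one, PowerSeries.coeff_mk, hF,
      PowerSeries.coeff_X, PowerSeries.coeff_X_pow, map_one, PowerSeries.coeff_C]
  · norm_num
  · norm_num [Ecount_formula m 0, ha]
    ring
  · norm_num [Ecount_formula m 0, Ecount_formula m 1, ha]
    ring
  · norm_num [Ecount_formula m n, Ecount_formula m (n + 1), Ecount_formula m (n + 2), ha]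
    push_cast
    ring
end

section
/- For all integers n ≥ 1 and m ≥ 0, the following binomial identity holds: 2 · ∑_{j=0}^{n-1} (-1)^j · C(n-1, j) · C((n-j)(m+1), n) = (m+1)^{n-1} · (mn + m + 2). -/
open Polynomial Finset

noncomputable def rpoly : ℕ → Polynomial ℤ
  | 0 => 1
  | m + 1 => (X + 1) * rpoly m + 1

lemma rpoly_mul_X (m : ℕ) : X * rpoly m = (X + 1) ^ (m + 1) - 1 := by
  induction m with
  | zero => simp [rpoly]
  | succ m ih =>
    rw [rpoly]
    have : X * ((X + 1) * rpoly m + 1) = (X + 1) * (X * rpoly m) + X := by ring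
    rw [this, ih, pow_succ]
    ring

lemma rpoly_coeff_zero (m : ℕ) : (rpoly m).coeff 0 = m + 1 := by
  induction m with
  | zero => simp [rpoly]
  | succ m ih =>
    rw [rpoly, Polynomial.coeff_add, Polynomial.mul_coeff_zero, ih, Polynomial.coeff_add,
      Polynomial.coeff_X_zero, Polynomial.coeff_one_zero]
    push_cast; ring

lemma coeff_one_mul' (p q : Polynomial ℤ) :
    (p * q).coeff 1 = p.coeff 0 * q.coeff 1 + p.coeff 1 * q.coeff 0 := by
  rw [Polynomial.coeff_mul, Finset.Nat.sum_antidiagonal_eq_sum_range_succ_mk]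
  simp [Finset.sum_range_succ]

lemma rpoly_coeff_one (m : ℕ) : (rpoly m).coeff 1 * 2 = m * (m + 1) := by
  induction m with
  | zero => simp [rpoly, Polynomial.coeff_one]
  | succ m ih =>
    rw [rpoly]
    simp only [Polynomial.coeff_add, coeff_one_mul', rpoly_coeff_zero]
    simp only [Polynomial.coeff_add, Polynomial.coeff_X_one, Polynomial.coeff_one,
      Polynomial.coeff_X_zero, Polynomial.coeff_one_zero]
    push_cast
    push_cast at ih
    linear_combination ih

lemma rpoly_pow_coeff_zero (m k : ℕ) : ((rpoly m) ^ k).coeff 0 = (m + 1) ^ k := by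
  induction k with
  | zero => simp
  | succ k ih => rw [pow_succ, Polynomial.mul_coeff_zero, ih, rpoly_coeff_zero, pow_succ]

lemma rpoly_pow_coeff_one (m k : ℕ) :
    ((rpoly m) ^ k).coeff 1 * (2 * (m + 1)) = k * (m + 1) ^ k * (m * (m + 1)) := by
  induction k with
  | zero => simp [Polynomial.coeff_one]
  | succ k ih =>
    rw [pow_succ, coeff_one_mul', rpoly_pow_coeff_zero, rpoly_coeff_zero]
    have h2 := rpoly_coeff_one m
    push_cast
    push_cast at ih h2
    linear_combination ((m : ℤ) + 1) ^ (k + 1) * h2 + ((m : ℤ) + 1) * ih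

/-- For all integers `n ≥ 1` and `m ≥ 0`:
`2 ∑_{j=0}^{n-1} (-1)^j C(n-1, j) C((n-j)(m+1), n) = (m+1)^{n-1} (mn + m + 2)`. -/
theorem stmt10 (n m : ℕ) (hn : 1 ≤ n) :
    2 * ∑ j ∈ Finset.range n,
        (-1 : ℤ) ^ j * Nat.choose (n - 1) j * Nat.choose ((n - j) * (m + 1)) n =
      (m + 1 : ℤ) ^ (n - 1) * (m * n + m + 2) := by
  obtain ⟨N, rfl⟩ : ∃ N, n = N + 1 := ⟨n - 1, (Nat.succ_pred_eq_of_pos hn).symm⟩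
  simp only [Nat.add_sub_cancel]
  set P : Polynomial ℤ := (X + 1) ^ (m + 1) with hP
  have key : ∑ j ∈ Finset.range (N + 1),
      (-1 : ℤ) ^ j * Nat.choose N j * Nat.choose ((N + 1 - j) * (m + 1)) (N + 1) =
      ((P - 1) ^ N * P).coeff (N + 1) := by
    rw [sub_pow P 1 N, Finset.sum_mul, Polynomial.finset_sum_coeff]
    rw [← Finset.sum_range_reflect]
    apply Finset.sum_congr rfl
    intro i hi
    rw [Finset.mem_range] at hi
    have hiN : i ≤ N := Nat.lt_succ_iff.mp hi
    rw [show N + 1 - 1 - i = N - i from by omega,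
      show N + 1 - (N - i) = i + 1 from by omega, Nat.choose_symm hiN]
    have : (-1 : Polynomial ℤ) ^ (i + N) * P ^ i * 1 ^ (N - i) * (N.choose i : Polynomial ℤ) * P
        = ((-1 : ℤ) ^ (i + N) * N.choose i) • ((X + 1) ^ ((i + 1) * (m + 1)) : Polynomial ℤ) := by
      rw [hP, zsmul_eq_mul]
      push_cast
      rw [show (i + 1) * (m + 1) = (m + 1) * i + (m + 1) by ring, pow_add, ← pow_mul]
      ring
    rw [this, Polynomial.coeff_smul, Polynomial.coeff_X_add_one_pow, smul_eq_mul]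
    have hNi : (-1 : ℤ) ^ (i + N) = (-1) ^ (N - i) := by
      rw [show i + N = (N - i) + 2 * i from by omega, pow_add]
      simp [pow_mul]
    rw [hNi]
  rw [key]
  have hPsub : P - 1 = X * rpoly m := (rpoly_mul_X m).symm
  rw [hPsub, mul_pow, mul_assoc, show N + 1 = 1 + N from add_comm _ _,
    Polynomial.coeff_X_pow_mul]
  have hcancel : ((m : ℤ) + 1) ≠ 0 := by positivity
  apply mul_right_cancel₀ hcancel
  rw [coeff_one_mul', rpoly_pow_coeff_zero]
  have hp0 : P.coeff 0 = 1 := by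
    rw [hP, Polynomial.coeff_X_add_one_pow]; simp
  have hp1 : P.coeff 1 = m + 1 := by
    rw [hP, Polynomial.coeff_X_add_one_pow]; simp
  rw [hp0, hp1]
  have h := rpoly_pow_coeff_one m N
  push_cast at h ⊢
  linear_combination h
end

section
/- For every integer n ≥ 1 and every real v > 0, the integral of exp(-v·(x_1 + ⋯ + x_n)) with respect to Lebesgue measure over the arbor polytope Q_{t_n} = {x ∈ ℝ^n : x_i ≥ 0 for all i, x_i ≤ 1 for 1 ≤ i ≤ n-1, x_1 + ⋯ + x_n ≤ n} equals (1 - e^{-v})^{n-1}/v^n - e^{-nv}/v. (This is the Laplace transform L_{t_n}(v) of the volume function of Q_{t_n}, i.e. L_{t_n}(E,V) = V^n(1-E)^{n-1} - V·E^n with E = e^{-v} and V = 1/v.) -/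
/-!
Slice `Q_{t_n}` along the last coordinate: over a point `y` of the unit cube `[0,1]^{n-1}` the
last coordinate ranges over `[0, n - ∑ yᵢ]`, so the inner integral is
`(e^{-v ∑ yᵢ} - e^{-nv}) / v`. On the cube, `e^{-v ∑ yᵢ}` factors into one-dimensional integrals
`(1 - e^{-v}) / v`, while the constant `e^{-nv}` integrates against the unit volume.
-/

open MeasureTheory

/-- The arbor polytope `Q_{t_n} ⊆ ℝ^n`: points `x` with `x i ≥ 0` for all `i`,
`x i ≤ 1` for the first `n - 1` coordinates, and `x 1 + ⋯ + x n ≤ n`. -/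
def Qtn (n : ℕ) : Set (Fin n → ℝ) :=
  {x | (∀ i, 0 ≤ x i) ∧ (∀ i : Fin n, (i : ℕ) < n - 1 → x i ≤ 1) ∧ ∑ i, x i ≤ n}

open Set Real

section ExpIntegrals

variable {v : ℝ}

theorem integral_Icc_exp_neg_mul (hv : v ≠ 0) {c : ℝ} (hc : 0 ≤ c) :
    ∫ t in Icc 0 c, exp (-v * t) = (1 - exp (-v * c)) / v := by
  rw [integral_Icc_eq_integral_Ioc, ← intervalIntegral.integral_of_le hc,
    intervalIntegral.integral_comp_mul_left (fun t => exp t) (neg_ne_zero.2 hv), integral_exp,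
    smul_eq_mul, mul_zero, exp_zero]
  field_simp
  ring

theorem integral_Icc_exp_neg_mul_add (hv : v ≠ 0) {s c : ℝ} (hsc : s ≤ c) :
    ∫ t in Icc 0 (c - s), exp (-v * (s + t)) = (exp (-v * s) - exp (-v * c)) / v := by
  simp_rw [mul_add, exp_add]
  rw [integral_const_mul, integral_Icc_exp_neg_mul hv (sub_nonneg.2 hsc), mul_div_assoc',
    mul_sub, mul_one, ← exp_add]
  ring_nf

variable {ι : Type*} [Fintype ι]

theorem integral_unitCube_exp_neg_mul_sum (hv : v ≠ 0) :
    ∫ y in Icc (0 : ι → ℝ) 1, exp (-v * ∑ i, y i) = ((1 - exp (-v)) / v) ^ Fintype.card ι := by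
  have hprod (y : ι → ℝ) : exp (-v * ∑ i, y i) = ∏ i, exp (-v * y i) := by
    rw [Finset.mul_sum, exp_sum]
  simp_rw [hprod, ← pi_univ_Icc, volume_pi, Measure.restrict_pi_pi]
  simp only [Pi.zero_apply, Pi.one_apply]
  rw [integral_fintype_prod_eq_pow (fun t => exp (-v * t)),
    integral_Icc_exp_neg_mul hv zero_le_one, mul_one]

theorem integral_unitCube_exp_neg_mul_sum_sub (hv : v ≠ 0) (c : ℝ) :
    ∫ y in Icc (0 : ι → ℝ) 1, (exp (-v * ∑ i, y i) - c) =
      ((1 - exp (-v)) / v) ^ Fintype.card ι - c := by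
  have hvol : volume.real (Icc (0 : ι → ℝ) 1) = 1 := by
    simp [measureReal_def, Real.volume_Icc_pi]
  have hexp : IntegrableOn (fun y : ι → ℝ => exp (-v * ∑ i, y i)) (Icc 0 1) :=
    (by fun_prop : Continuous _).continuousOn.integrableOn_compact isCompact_Icc
  have hconst : IntegrableOn (fun _ : ι → ℝ => c) (Icc 0 1) :=
    integrableOn_const isCompact_Icc.measure_lt_top.ne
  rw [integral_sub hexp hconst, integral_unitCube_exp_neg_mul_sum hv, setIntegral_const, hvol,
    one_smul]

end ExpIntegrals

theorem isClosed_Qtn (n : ℕ) : IsClosed (Qtn n) := by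
  simp only [Qtn, ofPred_and, ofPred_forall]
  exact (isClosed_iInter fun i => isClosed_le continuous_const (continuous_apply i)).inter
    ((isClosed_iInter fun i => isClosed_iInter fun _ =>
      isClosed_le (continuous_apply i) continuous_const).inter
    (isClosed_le (by fun_prop) continuous_const))

theorem Qtn_subset_Icc (n : ℕ) : Qtn n ⊆ Icc 0 (n : Fin n → ℝ) := fun _ ⟨hx0, _, hsum⟩ =>
  ⟨hx0, fun i => (Finset.single_le_sum (fun j _ => hx0 j) (Finset.mem_univ i)).trans hsum⟩

theorem isCompact_Qtn (n : ℕ) : IsCompact (Qtn n) :=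
  isCompact_Icc.of_isClosed_subset (isClosed_Qtn n) (Qtn_subset_Icc n)

theorem snoc_mem_Qtn_iff {m : ℕ} (y : Fin m → ℝ) (t : ℝ) :
    Fin.snoc y t ∈ Qtn (m + 1) ↔ y ∈ Icc 0 1 ∧ t ∈ Icc 0 ((m : ℝ) + 1 - ∑ i, y i) := by
  simp only [Qtn, mem_ofPred_eq, Fin.forall_fin_succ', Fin.snoc_castSucc, Fin.snoc_last,
    Fin.sum_snoc, mem_Icc, Pi.le_def, Pi.zero_apply, Pi.one_apply, Fin.val_castSucc, Fin.val_last,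
    Nat.add_sub_cancel, Fin.is_lt, forall_const, lt_irrefl, IsEmpty.forall_iff, and_true,
    Nat.cast_add, Nat.cast_one]
  constructor
  · rintro ⟨⟨hy0, ht0⟩, hy1, hsum⟩
    exact ⟨⟨hy0, hy1⟩, ht0, by linarith⟩
  · rintro ⟨⟨hy0, hy1⟩, ht0, ht⟩
    exact ⟨⟨hy0, ht0⟩, hy1, by linarith⟩

theorem setIntegral_Qtn_succ {m : ℕ} {f : (Fin (m + 1) → ℝ) → ℝ}
    (hf : IntegrableOn f (Qtn (m + 1))) :
    ∫ x in Qtn (m + 1), f x =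
      ∫ y in Icc (0 : Fin m → ℝ) 1, ∫ t in Icc 0 ((m : ℝ) + 1 - ∑ i, y i), f (Fin.snoc y t) := by
  classical
  set e := (MeasurableEquiv.piFinSuccAbove (fun _ : Fin (m + 1) => ℝ) (Fin.last m)).symm
  have he : MeasurePreserving e := (volume_preserving_piFinSuccAbove _ _).symm
  have he_apply (p : ℝ × (Fin m → ℝ)) : e p = Fin.snoc p.2 p.1 := by
    simp [e, MeasurableEquiv.piFinSuccAbove, Fin.snocEquiv]
  have hint : Integrable (fun p : ℝ × (Fin m → ℝ) => (Qtn (m + 1)).indicator f (Fin.snoc p.2 p.1))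
      (volume.prod volume) := by
    rw [← Measure.volume_eq_prod]
    simp_rw [← he_apply]
    exact (he.integrable_comp_emb e.measurableEmbedding).2 <|
      hf.integrable_indicator (isClosed_Qtn _).measurableSet
  rw [← integral_indicator (isClosed_Qtn _).measurableSet, ← he.integral_comp']
  simp_rw [he_apply]
  rw [Measure.volume_eq_prod, integral_prod_symm _ hint, ← integral_indicator measurableSet_Icc]
  refine integral_congr_ae (Filter.Eventually.of_forall fun y => ?_)
  dsimp only
  by_cases hy : y ∈ Icc (0 : Fin m → ℝ) 1
  · rw [indicator_of_mem hy, ← integral_indicator measurableSet_Icc]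
    congr 1
    funext t
    simp only [indicator_apply, snoc_mem_Qtn_iff, hy, true_and]
  · rw [indicator_of_notMem hy]
    simp only [indicator_apply, snoc_mem_Qtn_iff, hy, false_and, if_false, integral_zero]

/-- For every integer `n ≥ 1` and every real `v > 0`, the Laplace transform of the
volume function of `Q_{t_n}`, i.e. the integral of `exp(-v (x₁ + ⋯ + xₙ))` over
`Q_{t_n}` with respect to Lebesgue measure, equals
`(1 - e^{-v})^{n-1}/vⁿ - e^{-nv}/v`. -/
theorem stmt12 (n : ℕ) (hn : 1 ≤ n) (v : ℝ) (hv : 0 < v) :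
    ∫ x in Qtn n, Real.exp (-v * ∑ i, x i) =
      (1 - Real.exp (-v)) ^ (n - 1) / v ^ n - Real.exp (-(n * v)) / v := by
  obtain ⟨m, rfl⟩ := Nat.exists_eq_add_of_le' hn
  have hslice (y : Fin m → ℝ) (hy : y ∈ Icc 0 1) :
      ∫ t in Icc 0 ((m : ℝ) + 1 - ∑ i, y i), exp (-v * ∑ i, (Fin.snoc y t : Fin (m + 1) → ℝ) i) =
        (exp (-v * ∑ i, y i) - exp (-v * (m + 1))) / v := by
    have hsum : ∑ i, y i ≤ m := by
      simpa using Finset.sum_le_sum fun i (_ : i ∈ Finset.univ) => hy.2 i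
    simp_rw [Fin.sum_snoc]
    exact integral_Icc_exp_neg_mul_add hv.ne' (by linarith)
  have hint : IntegrableOn (fun x : Fin (m + 1) → ℝ => exp (-v * ∑ i, x i)) (Qtn (m + 1)) :=
    (by fun_prop : Continuous _).continuousOn.integrableOn_compact (isCompact_Qtn _)
  rw [setIntegral_Qtn_succ hint, setIntegral_congr_fun measurableSet_Icc hslice, integral_div,
    integral_unitCube_exp_neg_mul_sum_sub hv.ne', Fintype.card_fin, Nat.add_sub_cancel, div_pow,
    pow_succ, sub_div, div_div]
  push_cast
  ring_nf
end
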